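/- arXiv:1511.07798 — 6 statements merged into one kernel-verified Lean document; each statement's English description precedes it below -/
import Mathlib

section
/- Let n ≥ 3. Every finite index subgroup of SL(n,ℤ) contains an element whose characteristic polynomial has nonzero discriminant (i.e., an element with n distinct complex eigenvalues). -/
/-!
With `L` the lower bidiagonal matrix of ones, `g = L Lᵀ` lies in `SL(n, ℤ)`, is positive definite,
and is tridiagonal with nonzero off-diagonal entries. Solving the eigen-equation row by row from
the bottom shows that an eigenvector of such a matrix is determined by its last coordinate, so all
eigenspaces are lines and, `g` being Hermitian, its `n` eigenvalues are distinct. Since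
`x ↦ x ^ k` is injective on positive reals, every power `g ^ k` with `k ≥ 1` also has `n` distinct
eigenvalues, and some such power lies in any finite index subgroup.
-/

open Matrix Polynomial Module.End
open scoped ComplexOrder

namespace Matrix

variable {R : Type*} {n : ℕ}

def IsUnreducedUpperHessenberg [Zero R] (A : Matrix (Fin n) (Fin n) R) : Prop :=
  (∀ i j : Fin n, (j : ℕ) + 1 < i → A i j = 0) ∧ ∀ i j : Fin n, (j : ℕ) + 1 = i → A i j ≠ 0

namespace IsUnreducedUpperHessenberg

variable {m : ℕ} {A : Matrix (Fin (m + 1)) (Fin (m + 1)) R}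

theorem eq_zero_of_mulVec_eq_smul [Semiring R] [NoZeroDivisors R]
    (hA : A.IsUnreducedUpperHessenberg) {μ : R} {v : Fin (m + 1) → R} (hv : A *ᵥ v = μ • v)
    (hlast : v (Fin.last m) = 0) : v = 0 := by
  suffices h : ∀ i j, i ≤ j → v j = 0 from funext fun j => h j j le_rfl
  refine Fin.reverseInduction (fun j hj => by rwa [Fin.last_le_iff.mp hj]) fun i ih j hj => ?_
  obtain hlt | rfl := hj.lt_or_eq
  · exact ih j (Fin.castSucc_lt_iff_succ_le.mp hlt)
  -- row `i + 1` of `A v = μ v` only involves `v i` and entries `v j` with `j > i`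
  have hrow := congrFun hv i.succ
  rw [Pi.smul_apply, ih _ le_rfl, smul_zero, mulVec, dotProduct,
    Finset.sum_eq_single i.castSucc] at hrow
  · exact (mul_eq_zero.mp hrow).resolve_left (hA.2 _ _ (by simp))
  · intro j _ hj
    rcases lt_or_gt_of_ne hj with hlt | hgt
    · rw [hA.1 _ _ (by simp [Fin.lt_def] at hlt ⊢; omega), zero_mul]
    · rw [ih j (Fin.castSucc_lt_iff_succ_le.mp hgt), mul_zero]
  · simp

theorem finrank_eigenspace_le_one {K : Type*} [Field K]
    {A : Matrix (Fin (m + 1)) (Fin (m + 1)) K} (hA : A.IsUnreducedUpperHessenberg) (μ : K) :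
    Module.finrank K (eigenspace (toLin' A) μ) ≤ 1 := by
  let evalLast := (LinearMap.proj (Fin.last m)).comp (eigenspace (toLin' A) μ).subtype
  have hinj : Function.Injective evalLast := by
    refine (injective_iff_map_eq_zero _).mpr fun v hv => Subtype.ext ?_
    exact hA.eq_zero_of_mulVec_eq_smul (mem_eigenspace_iff.mp v.2) hv
  simpa using LinearMap.finrank_le_finrank_of_injective hinj

end IsUnreducedUpperHessenberg

variable {𝕜 ι : Type*} [RCLike 𝕜] [Fintype ι] [DecidableEq ι] {A : Matrix ι ι 𝕜}

theorem IsHermitian.eigenvalues_injective (hA : A.IsHermitian)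
    (h : ∀ μ : 𝕜, Module.finrank 𝕜 (eigenspace (toLin' A) μ) ≤ 1) :
    Function.Injective hA.eigenvalues := by
  intro i j hij
  let μ : 𝕜 := hA.eigenvalues i
  let e : {k // hA.eigenvalues k = hA.eigenvalues i} → eigenspace (toLin' A) μ :=
    fun k => ⟨⇑(hA.eigenvectorBasis k), mem_eigenspace_iff.mpr <| by
      rw [toLin'_apply, hA.mulVec_eigenvectorBasis, k.2, RCLike.real_smul_eq_coe_smul (K := 𝕜)]⟩
  have he : LinearIndependent 𝕜 e := by
    refine LinearIndependent.of_comp (eigenspace (toLin' A) μ).subtype ?_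
    exact (hA.eigenvectorBasis.orthonormal.linearIndependent.comp _ Subtype.val_injective).map'
      (WithLp.linearEquiv 2 𝕜 (ι → 𝕜)).toLinearMap (LinearEquiv.ker _)
  have hcard := he.fintype_card_le_finrank.trans (h μ)
  exact congrArg Subtype.val (Fintype.card_le_one_iff.mp hcard ⟨i, rfl⟩ ⟨j, hij.symm⟩)

theorem PosDef.card_roots_charpoly_pow (hA : A.PosDef)
    (hinj : Function.Injective hA.1.eigenvalues) {k : ℕ} (hk : k ≠ 0) :
    (A ^ k).charpoly.roots.toFinset.card = Fintype.card ι := by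
  have hpow_inj : Function.Injective fun i => ((hA.1.eigenvalues i ^ k : ℝ) : 𝕜) :=
    RCLike.ofReal_injective.comp fun i j h =>
      hinj <| (pow_left_inj₀ (hA.eigenvalues_pos i).le (hA.eigenvalues_pos j).le hk).mp h
  rw [← cfc_pow_id (R := ℝ) A k hA.1.isSelfAdjoint, hA.1.charpoly_cfc_eq,
    ← Finset.prod_image (f := fun a => X - C a) hpow_inj.injOn, roots_prod_X_sub_C,
    Finset.val_toFinset, Finset.card_image_of_injective _ hpow_inj, Finset.card_univ]

def lowerBidiagonalOnes (n : ℕ) : Matrix (Fin n) (Fin n) ℤ :=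
  of fun i j => if i = j ∨ (i : ℕ) = j + 1 then 1 else 0

theorem det_lowerBidiagonalOnes (n : ℕ) : (lowerBidiagonalOnes n).det = 1 := by
  refine (det_of_isLowerTriangular _ fun i j hij => if_neg ?_).trans (Finset.prod_eq_one ?_)
  · simp only [OrderDual.toDual_lt_toDual, Fin.lt_def] at hij
    omega
  · simp

theorem lowerBidiagonalOnes_mul_transpose_apply (n : ℕ) {i j : Fin n} (h : (j : ℕ) + 1 ≤ i) :
    (lowerBidiagonalOnes n * (lowerBidiagonalOnes n)ᵀ) i j = if (j : ℕ) + 1 = i then 1 else 0 := by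
  rw [mul_apply, Finset.sum_eq_single j]
  · simp only [lowerBidiagonalOnes, transpose_apply, of_apply, Fin.ext_iff]
    split_ifs <;> simp_all
    omega
  · intro k _ hk
    simp only [lowerBidiagonalOnes, transpose_apply, of_apply, Fin.ext_iff]
    split_ifs <;> first | rfl | omega
  · simp

def gramLowerBidiagonalOnes (n : ℕ) : SpecialLinearGroup (Fin n) ℤ :=
  ⟨lowerBidiagonalOnes n * (lowerBidiagonalOnes n)ᵀ, by
    rw [det_mul, det_transpose, det_lowerBidiagonalOnes, one_mul]⟩

theorem posDef_map_gramLowerBidiagonalOnes (n : ℕ) :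
    ((gramLowerBidiagonalOnes n : Matrix (Fin n) (Fin n) ℤ).map ((↑) : ℤ → ℂ)).PosDef := by
  set L := (lowerBidiagonalOnes n).map ((↑) : ℤ → ℂ)
  have hL : IsUnit L := by
    rw [isUnit_iff_isUnit_det, ← Int.cast_det, det_lowerBidiagonalOnes, Int.cast_one]
    exact isUnit_one
  have hgram :
      (gramLowerBidiagonalOnes n : Matrix (Fin n) (Fin n) ℤ).map ((↑) : ℤ → ℂ) = L * Lᴴ := by
    rw [← conjTranspose_map _ fun z => (star_intCast z).symm,
      conjTranspose_eq_transpose_of_trivial]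
    exact Matrix.map_mul (f := Int.castRingHom ℂ)
  rw [hgram]
  exact PosDef.mul_conjTranspose_self L (vecMul_injective_of_isUnit hL)

theorem isUnreducedUpperHessenberg_map_gramLowerBidiagonalOnes (n : ℕ) :
    ((gramLowerBidiagonalOnes n : Matrix (Fin n) (Fin n) ℤ).map
      ((↑) : ℤ → ℂ)).IsUnreducedUpperHessenberg := by
  refine ⟨fun i j h => ?_, fun i j h => ?_⟩
  · simp [gramLowerBidiagonalOnes, lowerBidiagonalOnes_mul_transpose_apply n h.le, h.ne]
  · simp [gramLowerBidiagonalOnes, lowerBidiagonalOnes_mul_transpose_apply n h.le, h]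

theorem card_roots_charpoly_map_gramLowerBidiagonalOnes_pow (m : ℕ) {k : ℕ} (hk : k ≠ 0) :
    (((gramLowerBidiagonalOnes (m + 1) ^ k : SpecialLinearGroup (Fin (m + 1)) ℤ) :
      Matrix (Fin (m + 1)) (Fin (m + 1)) ℤ).map ((↑) : ℤ → ℂ)).charpoly.roots.toFinset.card =
      m + 1 := by
  have hA := posDef_map_gramLowerBidiagonalOnes (m + 1)
  have hinj := hA.1.eigenvalues_injective
    (isUnreducedUpperHessenberg_map_gramLowerBidiagonalOnes (m + 1)).finrank_eigenspace_le_one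
  have hmap : ((gramLowerBidiagonalOnes (m + 1) ^ k : SpecialLinearGroup (Fin (m + 1)) ℤ) :
      Matrix (Fin (m + 1)) (Fin (m + 1)) ℤ).map ((↑) : ℤ → ℂ) =
      ((gramLowerBidiagonalOnes (m + 1) : Matrix (Fin (m + 1)) (Fin (m + 1)) ℤ).map (↑)) ^ k := by
    rw [SpecialLinearGroup.coe_pow]
    exact Matrix.map_pow _ (Int.castRingHom ℂ) k
  rw [hmap, hA.card_roots_charpoly_pow hinj hk, Fintype.card_fin]

end Matrix

theorem stmt3_general (n : ℕ)
    (Γ : Subgroup (Matrix.SpecialLinearGroup (Fin n) ℤ)) (hΓ : Γ.FiniteIndex) :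
    ∃ g ∈ Γ, (((g : Matrix (Fin n) (Fin n) ℤ).map
        ((↑) : ℤ → ℂ)).charpoly).roots.toFinset.card = n := by
  cases n with
  | zero => exact ⟨1, Γ.one_mem, by simp⟩
  | succ m =>
    obtain ⟨k, hk, -, hmem⟩ :=
      Γ.exists_pow_mem_of_index_ne_zero hΓ.index_ne_zero (gramLowerBidiagonalOnes (m + 1))
    exact ⟨_, hmem, card_roots_charpoly_map_gramLowerBidiagonalOnes_pow m hk.ne'⟩

/-- **Theorem.** Let `n ≥ 3`. Every finite index subgroup of `SL(n,ℤ)` contains an element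
whose characteristic polynomial has nonzero discriminant, i.e. an element with `n` distinct
complex eigenvalues (the characteristic polynomial over `ℂ` has `n` distinct roots). -/
theorem stmt3 (n : ℕ) (hn : 3 ≤ n)
    (Γ : Subgroup (Matrix.SpecialLinearGroup (Fin n) ℤ)) (hΓ : Γ.FiniteIndex) :
    ∃ g ∈ Γ, (((g : Matrix (Fin n) (Fin n) ℤ).map
        ((↑) : ℤ → ℂ)).charpoly).roots.toFinset.card = n :=
  stmt3_general n Γ hΓ
end

section
/- Let g ∈ SL(n,ℤ) admit a cyclic vector over ℚ (i.e., there is v ∈ ℚ^n with v, gv, ..., g^{n-1}v a basis of ℚ^n). Then g is conjugate in SL(n,ℤ) to a matrix lying in the Bruhat cell B·p_σ·U corresponding to the n-cycle σ = (1 2 ⋯ n), where B is the upper triangular Borel subgroup of SL(n,ℚ) and p_σ is a signed permutation matrix representing σ. -/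
/-- The signed permutation matrix `p_σ` of the `n`-cycle `σ = (1 2 ⋯ n)`: entry `(σ(i), i)`
is `1` for `i ≤ n-1`, entry `(σ(n), n)` is `(-1)^{n+1}`, all other entries are `0`
(0-indexed: `σ` sends `j` to `j+1 mod n`). Its determinant is `1`. -/
def psigma (n : ℕ) : Matrix (Fin n) (Fin n) ℚ := fun i j =>
  if (i : ℕ) = ((j : ℕ) + 1) % n then (if (j : ℕ) = n - 1 then (-1 : ℚ) ^ (n + 1) else 1)
  else 0

/-!
Let `P` be the matrix whose columns form the cyclic basis `v, gv, …, gⁿ⁻¹v`. Then `g P = P C`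
where `C` sends `eₗ` to `eₗ₊₁` for `l < n - 1`, exactly as `p_σ` does, so `C = p_σ T` with `T`
upper triangular. Euclid's algorithm, carried out with integral transvections on pairs of rows
after clearing denominators, gives `x ∈ SL(n,ℤ)` with `L = x P` upper triangular. Hence
`x g x⁻¹ = L p_σ (T L⁻¹)`, and the diagonal part of the upper triangular matrix `T L⁻¹` can be
moved across the monomial matrix `p_σ` into the Borel factor.
-/

open Matrix

namespace Matrix

section Transvections

variable {R : Type*} [EuclideanDomain R] {m : Type*} [Fintype m] [DecidableEq m]

def transvectionsOn (i j : m) : Submonoid (Matrix m m R) :=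
  Submonoid.closure {M | ∃ c, M = transvection i j c ∨ M = transvection j i c}

variable {i j : m}

lemma transvection_mem_transvectionsOn (c : R) : transvection i j c ∈ transvectionsOn i j :=
  Submonoid.subset_closure ⟨c, .inl rfl⟩

lemma transvection_mem_transvectionsOn' (c : R) : transvection j i c ∈ transvectionsOn i j :=
  Submonoid.subset_closure ⟨c, .inr rfl⟩

lemma det_eq_one_of_mem_transvectionsOn (hij : i ≠ j) {y : Matrix m m R}
    (hy : y ∈ transvectionsOn i j) : y.det = 1 := by
  induction hy using Submonoid.closure_induction with
  | mem y hy =>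
    obtain ⟨c, rfl | rfl⟩ := hy
    exacts [det_transvection_of_ne _ _ hij c, det_transvection_of_ne _ _ hij.symm c]
  | one => exact det_one
  | mul y z _ _ hy hz => rw [det_mul, hy, hz, mul_one]

lemma mul_apply_of_mem_transvectionsOn {y : Matrix m m R} (hy : y ∈ transvectionsOn i j)
    (B : Matrix m m R) {k : m} (hki : k ≠ i) (hkj : k ≠ j) (l : m) : (y * B) k l = B k l := by
  induction hy using Submonoid.closure_induction generalizing B with
  | mem y hy =>
    obtain ⟨c, rfl | rfl⟩ := hy
    exacts [transvection_mul_apply_of_ne _ _ _ _ hki c B,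
      transvection_mul_apply_of_ne _ _ _ _ hkj c B]
  | one => rw [one_mul]
  | mul y z _ _ hy hz => rw [mul_assoc, hy, hz]

lemma mul_apply_eq_zero_of_mem_transvectionsOn {y : Matrix m m R}
    (hy : y ∈ transvectionsOn i j) {B : Matrix m m R} {l : m} (hi : B i l = 0) (hj : B j l = 0) :
    (y * B) i l = 0 ∧ (y * B) j l = 0 := by
  induction hy using Submonoid.closure_induction generalizing B with
  | mem y hy =>
    obtain ⟨c, rfl | rfl⟩ := hy
    · by_cases hji : j = i
      · subst hji; simp [hi]
      simp [transvection_mul_apply_same, transvection_mul_apply_of_ne _ _ _ _ hji, hi, hj]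
    · by_cases hij : i = j
      · subst hij; simp [hi]
      simp [transvection_mul_apply_same, transvection_mul_apply_of_ne _ _ _ _ hij, hi, hj]
  | one => simp [hi, hj]
  | mul y z _ _ hy hz =>
    obtain ⟨hzi, hzj⟩ := hz hi hj
    simpa only [mul_assoc] using hy hzi hzj

lemma signedSwap_mul_apply (hij : i ≠ j) (B : Matrix m m R) (l : m) :
    (transvection i j 1 * transvection j i (-1) * transvection i j 1 * B : Matrix m m R) i l =
      B j l := by
  simp only [mul_assoc, transvection_mul_apply_same,
    transvection_mul_apply_of_ne _ _ _ _ hij.symm, transvection_mul_apply_of_ne _ _ _ _ hij]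
  ring

lemma exists_mem_transvectionsOn_mul_apply_eq_zero (hij : i ≠ j) (l : m) (B : Matrix m m R) :
    ∃ y ∈ (transvectionsOn i j : Submonoid (Matrix m m R)), (y * B) i l = 0 := by
  suffices ∀ b : R, ∀ B : Matrix m m R, B i l = b →
      ∃ y ∈ (transvectionsOn i j : Submonoid (Matrix m m R)), (y * B) i l = 0 from this _ B rfl
  intro b
  induction b using WellFounded.induction (EuclideanDomain.r_wellFounded (R := R)) with
  | h b ih =>
    rintro B rfl
    by_cases hb : B i l = 0
    · exact ⟨1, one_mem _, by rwa [one_mul]⟩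
    let W : Matrix m m R := transvection i j 1 * transvection j i (-1) * transvection i j 1 *
      transvection j i (-(B j l / B i l))
    have hW : W ∈ transvectionsOn i j := by
      refine mul_mem (mul_mem (mul_mem ?_ ?_) ?_) ?_ <;>
        first
        | exact transvection_mem_transvectionsOn _
        | exact transvection_mem_transvectionsOn' _
    have hWB : (W * B) i l = B j l % B i l := by
      rw [show W * B = transvection i j 1 * transvection j i (-1) * transvection i j 1 *
          (transvection j i (-(B j l / B i l)) * B) by simp only [W, mul_assoc],
        signedSwap_mul_apply hij, transvection_mul_apply_same, EuclideanDomain.mod_eq_sub_mul_div]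
      ring
    obtain ⟨y, hy, hyB⟩ := ih _ (hWB ▸ EuclideanDomain.mod_lt _ hb) (W * B) rfl
    exact ⟨y * W, mul_mem hy hW, by rwa [mul_assoc]⟩

end Transvections

section Triangularization

variable {R : Type*} [EuclideanDomain R] {m : Type*} [Fintype m] [LinearOrder m]

open Finset

lemma exists_det_eq_one_clear_column (B : Matrix m m R) (a : m)
    (hB : ∀ i j, j < a → j < i → B i j = 0) :
    ∃ y : Matrix m m R, y.det = 1 ∧ (∀ i j, j < a → j < i → (y * B) i j = 0) ∧
      ∀ i, a < i → (y * B) i a = 0 := by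
  suffices ∀ t : Finset m, ∃ y : Matrix m m R, y.det = 1 ∧
      (∀ i j, j < a → j < i → (y * B) i j = 0) ∧ ∀ i ∈ t, a < i → (y * B) i a = 0 by
    obtain ⟨y, hy, hyB, hya⟩ := this univ
    exact ⟨y, hy, hyB, fun i => hya i (mem_univ i)⟩
  intro t
  induction t using Finset.induction_on with
  | empty => exact ⟨1, det_one, by simpa using hB, by simp⟩
  | insert i t _ ih =>
    obtain ⟨y, hy, hyB, hyt⟩ := ih
    by_cases hai : a < i
    swap
    · refine ⟨y, hy, hyB, fun k hk hak => ?_⟩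
      obtain rfl | hk := mem_insert.1 hk
      exacts [absurd hak hai, hyt k hk hak]
    obtain ⟨z, hz, hzB⟩ := exists_mem_transvectionsOn_mul_apply_eq_zero hai.ne' a (y * B)
    refine ⟨z * y, ?_, fun k j hja hjk => ?_, fun k hk hak => ?_⟩
    · rw [det_mul, det_eq_one_of_mem_transvectionsOn hai.ne' hz, hy, one_mul]
    · rw [mul_assoc]
      by_cases hk : k = i ∨ k = a
      · have := mul_apply_eq_zero_of_mem_transvectionsOn hz (hyB i j hja (hja.trans hai))
          (hyB a j hja hja)
        obtain rfl | rfl := hk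
        exacts [this.1, this.2]
      · rw [not_or] at hk
        rw [mul_apply_of_mem_transvectionsOn hz _ hk.1 hk.2]
        exact hyB k j hja hjk
    · rw [mul_assoc]
      by_cases hki : k = i
      · subst hki; exact hzB
      · rw [mul_apply_of_mem_transvectionsOn hz _ hki hak.ne']
        exact hyt k ((mem_insert.1 hk).resolve_left hki) hak

theorem exists_det_eq_one_isUpperTriangular_mul (A : Matrix m m R) :
    ∃ x : Matrix m m R, x.det = 1 ∧ (x * A).IsUpperTriangular := by
  -- Restricting to lower sets makes `Finset.induction_on_max` clear the columns from left to right.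
  suffices ∀ s : Finset m, IsLowerSet (s : Set m) →
      ∃ x : Matrix m m R, x.det = 1 ∧ ∀ i j, j ∈ s → j < i → (x * A) i j = 0 by
    obtain ⟨x, hx, hxA⟩ := this univ (by simp [isLowerSet_univ])
    exact ⟨x, hx, fun i j hji => hxA i j (mem_univ j) hji⟩
  intro s
  induction s using Finset.induction_on_max with
  | empty => exact fun _ => ⟨1, det_one, by simp⟩
  | insert a s hs ih =>
    intro hlow
    have hlt : ∀ j, j < a → j ∈ s := fun j hja =>
      (mem_insert.1 (hlow hja.le (mem_insert_self a s))).resolve_left hja.ne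
    obtain ⟨x, hx, hxA⟩ := ih fun j' j hjj' hj' => hlt j (hjj'.trans_lt (hs j' hj'))
    obtain ⟨y, hy, hyB, hya⟩ := exists_det_eq_one_clear_column (x * A) a
      fun i j hja hji => hxA i j (hlt j hja) hji
    refine ⟨y * x, by rw [det_mul, hy, hx, one_mul], fun i j hj hji => ?_⟩
    rw [mul_assoc]
    obtain rfl | hj := mem_insert.1 hj
    exacts [hya i hji, hyB i j (hs j hj) hji]

theorem exists_det_eq_one_isUpperTriangular_map_mul {K : Type*} [Field K] [Algebra R K]
    [IsFractionRing R K] (P : Matrix m m K) :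
    ∃ x : Matrix m m R, x.det = 1 ∧ (x.map (algebraMap R K) * P).IsUpperTriangular := by
  obtain ⟨b, hb⟩ := IsLocalization.exist_integer_multiples_of_finite (nonZeroDivisors R)
    fun p : m × m => P p.1 p.2
  choose A hA using hb
  obtain ⟨x, hx, hxA⟩ := exists_det_eq_one_isUpperTriangular_mul (Matrix.of fun i j => A (i, j))
  refine ⟨x, hx, fun i j hji => ?_⟩
  have hb0 : algebraMap R K b ≠ 0 := IsFractionRing.to_map_ne_zero_of_mem_nonZeroDivisors b.2
  refine (mul_eq_zero.1 ?_).resolve_left hb0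
  have := congrArg (algebraMap R K) (hxA hji)
  rw [map_zero, mul_apply, map_sum] at this
  rw [← this, mul_apply, Finset.mul_sum]
  refine Finset.sum_congr rfl fun k _ => ?_
  simp only [map_apply, of_apply, map_mul, hA, Algebra.smul_def]
  ring

end Triangularization

lemma permMatrix_mul_diagonal {m R : Type*} [Fintype m] [DecidableEq m] [Semiring R]
    (σ : Equiv.Perm m) (d : m → R) :
    σ.permMatrix R * diagonal d = diagonal (fun i => d (σ i)) * σ.permMatrix R := by
  ext i j
  simp only [mul_diagonal, diagonal_mul, Equiv.Perm.permMatrix, PEquiv.toMatrix_apply,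
    Equiv.toPEquiv_apply, Option.mem_def, Option.some.injEq]
  split_ifs with h <;> simp [h]

lemma IsUpperTriangular.exists_eq_diagonal_mul {K m : Type*} [Field K] [Fintype m]
    [LinearOrder m] {S : Matrix m m K} (hS : S.IsUpperTriangular) (hdet : S.det ≠ 0) :
    ∃ (d : m → K) (u : Matrix m m K), u.IsUpperTriangular ∧ (∀ i, u i i = 1) ∧
      S = diagonal d * u := by
  have hdiag : ∀ i, S i i ≠ 0 := by
    rw [det_of_isUpperTriangular hS] at hdet
    exact fun i => Finset.prod_ne_zero_iff.1 hdet i (Finset.mem_univ i)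
  refine ⟨fun i => S i i, diagonal (fun i => (S i i)⁻¹) * S,
    (blockTriangular_diagonal _).mul hS, fun i => ?_, ?_⟩
  · rw [diagonal_mul, inv_mul_cancel₀ (hdiag i)]
  · rw [← mul_assoc, diagonal_mul_diagonal]
    simp [mul_inv_cancel₀ (hdiag _)]

end Matrix

lemma coe_finRotate_eq_add_one_mod {n : ℕ} (j : Fin n) :
    (finRotate n j : ℕ) = ((j : ℕ) + 1) % n := by
  rw [finRotate_apply, Fin.val_add, Fin.val_one', Nat.add_mod_mod]

lemma psigma_eq_permMatrix_mul_diagonal (n : ℕ) :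
    psigma n = (finRotate n)⁻¹.permMatrix ℚ *
      diagonal fun j : Fin n => if (j : ℕ) = n - 1 then (-1 : ℚ) ^ (n + 1) else 1 := by
  ext i j
  have : (finRotate n)⁻¹ i = j ↔ (i : ℕ) = ((j : ℕ) + 1) % n := by
    rw [Equiv.Perm.inv_eq_iff_eq, Fin.ext_iff, coe_finRotate_eq_add_one_mod]
  simp only [psigma, mul_diagonal, Equiv.Perm.permMatrix, PEquiv.toMatrix_apply,
    Equiv.toPEquiv_apply, Option.mem_def, Option.some.injEq, this]
  split_ifs <;> simp

lemma det_psigma (n : ℕ) : (psigma n).det = 1 := by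
  rw [psigma_eq_permMatrix_mul_diagonal, det_mul, det_permutation, det_diagonal]
  rcases n with _ | m
  · simp
  rw [Finset.prod_eq_single (Fin.last m) (fun j _ hj => if_neg ?_) (by simp)]
  · simp only [Equiv.Perm.sign_inv, sign_finRotate, add_tsub_cancel_right,
      Units.val_pow_eq_pow_val, Units.val_neg, Units.val_one, Int.reduceNeg, Int.cast_pow,
      Int.cast_neg, Int.cast_one, Fin.val_last, if_true, ← pow_add]
    exact Even.neg_one_pow ⟨m + 1, by ring⟩
  · exact fun h => hj (Fin.ext h)

lemma psigma_mul_diagonal (n : ℕ) (d : Fin n → ℚ) :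
    psigma n * diagonal d = diagonal (fun i => d ((finRotate n).symm i)) * psigma n := by
  rw [psigma_eq_permMatrix_mul_diagonal, mul_assoc, (commute_diagonal _ d).eq, ← mul_assoc,
    permMatrix_mul_diagonal, mul_assoc]
  rfl

lemma psigma_mulVec_single {n : ℕ} {k l : Fin n} (h : (k : ℕ) = l + 1) :
    psigma n *ᵥ Pi.single l 1 = Pi.single k 1 := by
  ext i
  rw [mulVec_single_one]
  have hl : (l : ℕ) ≠ n - 1 := by omega
  have hk : ((l : ℕ) + 1) % n = k := by rw [← h]; exact Nat.mod_eq_of_lt k.isLt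
  simp [psigma, Pi.single_apply, hl, hk, Fin.ext_iff]

lemma exists_isUpperTriangular_mul_psigma_mul {n : ℕ} (G P : Matrix (Fin n) (Fin n) ℚ)
    (hP : P.det ≠ 0) (hG : ∀ k l : Fin n, (k : ℕ) = l + 1 → G *ᵥ P.col l = P.col k) :
    ∃ T : Matrix (Fin n) (Fin n) ℚ, T.IsUpperTriangular ∧ G * P = P * psigma n * T := by
  set Q := P * psigma n
  have hQ : IsUnit Q.det := by simpa [Q, det_mul, det_psigma] using hP
  refine ⟨Q⁻¹ * (G * P), fun k l hlk => ?_, (mul_nonsing_inv_cancel_left _ _ hQ).symm⟩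
  have hl : (l : ℕ) + 1 < n := by have : (l : ℕ) < k := hlk; omega
  have hcol : (Q⁻¹ * (G * P)) *ᵥ Pi.single l 1 = Pi.single l 1 := by
    apply mulVec_injective_of_det_ne_zero hQ.ne_zero
    rw [mulVec_mulVec, mul_nonsing_inv_cancel_left _ _ hQ, ← mulVec_mulVec, mulVec_single_one,
      hG ⟨l + 1, hl⟩ l rfl, ← mulVec_mulVec, psigma_mulVec_single (k := ⟨l + 1, hl⟩) rfl,
      mulVec_single_one]
  have := congrFun hcol k
  rwa [mulVec_single_one, col_apply, Pi.single_eq_of_ne (show k ≠ l from hlk.ne')] at this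

lemma exists_eq_mul_psigma_mul {n : ℕ} {H L T : Matrix (Fin n) (Fin n) ℚ}
    (hL : L.IsUpperTriangular) (hT : T.IsUpperTriangular) (hLdet : L.det ≠ 0) (hH : H.det = 1)
    (h : H * L = L * psigma n * T) :
    ∃ b u : Matrix (Fin n) (Fin n) ℚ, b.IsUpperTriangular ∧ b.det = 1 ∧
      u.IsUpperTriangular ∧ (∀ i, u i i = 1) ∧ H = b * psigma n * u := by
  have hLunit : IsUnit L.det := isUnit_iff_ne_zero.2 hLdet
  have hTdet : T.det = 1 := by
    have := congrArg det h
    rw [det_mul, det_mul, det_mul, hH, det_psigma, one_mul, mul_one] at this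
    exact (mul_left_cancel₀ hLdet (this.symm.trans (mul_one _).symm))
  have hS : (T * L⁻¹).IsUpperTriangular := by
    let _ := invertibleOfIsUnitDet L hLunit
    exact hT.mul (blockTriangular_inv_of_blockTriangular hL)
  have hSdet : (T * L⁻¹).det ≠ 0 := by
    rw [det_mul, hTdet, one_mul]
    exact (isUnit_nonsing_inv_det L hLunit).ne_zero
  obtain ⟨d, u, hu, hu1, hdu⟩ := hS.exists_eq_diagonal_mul hSdet
  set b := L * diagonal fun i => d ((finRotate n).symm i)
  have hHbu : H = b * psigma n * u := calc
    H = H * L * L⁻¹ := (mul_nonsing_inv_cancel_right _ _ hLunit).symm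
    _ = L * (psigma n * diagonal d) * u := by rw [h, mul_assoc _ T, hdu]; simp only [mul_assoc]
    _ = b * psigma n * u := by rw [psigma_mul_diagonal]; simp only [b, mul_assoc]
  have hudet : u.det = 1 := by
    rw [det_of_isUpperTriangular hu]
    exact Finset.prod_eq_one fun i _ => hu1 i
  refine ⟨b, u, hL.mul (blockTriangular_diagonal _), ?_, hu, hu1, hHbu⟩
  have := congrArg det hHbu
  rwa [det_mul, det_mul, det_psigma, hudet, mul_one, mul_one, hH, eq_comm] at this

theorem stmt6_general (n : ℕ) (g : Matrix.SpecialLinearGroup (Fin n) ℤ)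
    (v : Fin n → ℚ) (c : Module.Basis (Fin n) ℚ (Fin n → ℚ))
    (hc : ∀ i : Fin n,
      c i = ((((g : Matrix (Fin n) (Fin n) ℤ)).map ((↑) : ℤ → ℚ)) ^ (i : ℕ)).mulVec v) :
    ∃ x : Matrix.SpecialLinearGroup (Fin n) ℤ, ∃ b u : Matrix (Fin n) (Fin n) ℚ,
      (∀ i j : Fin n, j < i → b i j = 0) ∧ b.det = 1 ∧
      (∀ i : Fin n, u i i = 1) ∧ (∀ i j : Fin n, j < i → u i j = 0) ∧
      (((x * g * x⁻¹ : Matrix.SpecialLinearGroup (Fin n) ℤ) :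
          Matrix (Fin n) (Fin n) ℤ)).map ((↑) : ℤ → ℚ) = b * psigma n * u := by
  let f := (Int.castRingHom ℚ).mapMatrix (m := Fin n)
  set P := (Pi.basisFun ℚ (Fin n)).toMatrix c
  have hP : P.det ≠ 0 := ((Pi.basisFun ℚ (Fin n)).isUnit_det c).ne_zero
  obtain ⟨T, hT, hGP⟩ := exists_isUpperTriangular_mul_psigma_mul (f g) P hP fun k l hkl => by
    change (g : Matrix (Fin n) (Fin n) ℤ).map ((↑) : ℤ → ℚ) *ᵥ c l = c k
    rw [hc, hc, mulVec_mulVec, ← pow_succ', hkl]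
  obtain ⟨x₀, hx₀, hL⟩ := exists_det_eq_one_isUpperTriangular_map_mul (R := ℤ) P
  rw [algebraMap_int_eq] at hL
  obtain ⟨x, rfl⟩ : ∃ x : SpecialLinearGroup (Fin n) ℤ, (x : Matrix (Fin n) (Fin n) ℤ) = x₀ :=
    ⟨⟨x₀, hx₀⟩, rfl⟩
  have hconj : ((x * g * x⁻¹ : SpecialLinearGroup (Fin n) ℤ) : Matrix (Fin n) (Fin n) ℤ) * x =
      x * g :=
    congrArg Subtype.val (inv_mul_cancel_right (x * g) x)
  have hHL : f (x * g * x⁻¹ : SpecialLinearGroup (Fin n) ℤ) * (f x * P) =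
      f x * P * psigma n * T := by
    rw [← mul_assoc, ← map_mul, hconj, map_mul, mul_assoc, hGP]
    simp only [mul_assoc]
  have hdet : ∀ y : SpecialLinearGroup (Fin n) ℤ, (f y).det = 1 := fun y => by
    rw [← RingHom.map_det, Matrix.SpecialLinearGroup.det_coe, map_one]
  obtain ⟨b, u, hb, hbdet, hu, hu1, hH⟩ := exists_eq_mul_psigma_mul hL hT
    (by change (f x * P).det ≠ 0; rw [det_mul, hdet, one_mul]; exact hP) (hdet _) hHL
  exact ⟨x, b, u, hb, hbdet, hu1, hu, hH⟩

/-- **Theorem.** If `g ∈ SL(n,ℤ)` admits a cyclic vector over `ℚ`, then `g` is conjugate in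
`SL(n,ℤ)` to a matrix lying in the Bruhat cell `B · p_σ · U` of the `n`-cycle
`σ = (1 2 ⋯ n)`, where `B` is the upper triangular Borel subgroup of `SL(n,ℚ)` and `U`
consists of upper unitriangular matrices. -/
theorem stmt6 (n : ℕ) (hn : 3 ≤ n) (g : Matrix.SpecialLinearGroup (Fin n) ℤ)
    (v : Fin n → ℚ) (c : Module.Basis (Fin n) ℚ (Fin n → ℚ))
    (hc : ∀ i : Fin n,
      c i = ((((g : Matrix (Fin n) (Fin n) ℤ)).map ((↑) : ℤ → ℚ)) ^ (i : ℕ)).mulVec v) :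
    ∃ x : Matrix.SpecialLinearGroup (Fin n) ℤ, ∃ b u : Matrix (Fin n) (Fin n) ℚ,
      (∀ i j : Fin n, j < i → b i j = 0) ∧ b.det = 1 ∧
      (∀ i : Fin n, u i i = 1) ∧ (∀ i j : Fin n, j < i → u i j = 0) ∧
      (((x * g * x⁻¹ : Matrix.SpecialLinearGroup (Fin n) ℤ) :
          Matrix (Fin n) (Fin n) ℤ)).map ((↑) : ℤ → ℚ) = b * psigma n * u :=
  stmt6_general n g v c hc
end

section
/- Let n ≥ 3 and let Λ ≤ SL(n,ℚ) be a subgroup whose intersection with the group U of upper unitriangular matrices is Zariski-dense in U. Then Λ contains U(kℤ) = {upper unitriangular integer matrices congruent to the identity modulo k off the diagonal} for some integer k ≥ 1, provided Λ ∩ U consists of integer matrices. -/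
/-- A matrix in `SL(n,ℚ)` is upper unitriangular: 1's on the diagonal, 0 below it. -/
def IsUnitriangular {n : ℕ} (x : Matrix.SpecialLinearGroup (Fin n) ℚ) : Prop :=
  (∀ i : Fin n, x.val i i = 1) ∧ ∀ i j : Fin n, j < i → x.val i j = 0

/-!
Let `U_d` be the unitriangular matrices `x` for which `x - 1` vanishes on the first `d`
superdiagonals. Reading off the `(d+1)`-th superdiagonal of `x - 1` is a homomorphism on `U_d`
with kernel `U_{d+1}`, and commutators multiply leading bands: `⁅U_d, U_e⁆ ≤ U_{d+e+1}`, with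
leading band `AB - BA`.

A linear functional on matrices vanishing on the first bands of `Λ ∩ U` is a degree-one
polynomial vanishing on `Λ ∩ U`, hence on `U` by density; so these bands span the first
superdiagonal over `ℚ`, and a positive multiple of every `E_{i,i+1}` is the band of an element
of `Λ ∩ U`. Commutators give the same for every `E_{i,j}`, `i < j`. Descending in `d`: if
`U_{d+1}(kℤ) ≤ Λ`, raise those elements to the exponent of `SL(n, ℤ/k)` to put them in `U(kℤ)`.
Every `x ∈ U_d(Kℤ)`, for a suitable multiple `K` of `k`, then has the same leading band as some
`y` in the group they generate, and `y⁻¹x ∈ U_{d+1}(kℤ) ≤ Λ`.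
-/

theorem AddSubgroup.exists_nsmul_mem_of_mem_span_rat {V : Type*} [AddCommGroup V] [Module ℚ V]
    (S : AddSubgroup V) {v : V} (hv : v ∈ Submodule.span ℚ (S : Set V)) :
    ∃ N : ℕ, 0 < N ∧ N • v ∈ S := by
  let saturation : Submodule ℚ V :=
    { carrier := {v | ∃ N : ℕ, 0 < N ∧ N • v ∈ S}
      zero_mem' := ⟨1, one_pos, by simp⟩
      add_mem' := by
        rintro v w ⟨N, hN, hv⟩ ⟨M, hM, hw⟩
        refine ⟨N * M, Nat.mul_pos hN hM, ?_⟩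
        rw [smul_add]
        exact add_mem (by rw [mul_nsmul]; exact S.nsmul_mem hv M)
          (by rw [mul_nsmul']; exact S.nsmul_mem hw N)
      smul_mem' := by
        rintro q v ⟨N, hN, hv⟩
        refine ⟨q.den * N, Nat.mul_pos q.pos hN, ?_⟩
        have key : ((q.den * N : ℕ) : ℚ) * q = (q.num : ℚ) * N := by
          push_cast
          rw [mul_right_comm, Rat.den_mul_eq_num]
        rw [← Nat.cast_smul_eq_nsmul ℚ, smul_smul, key, mul_smul, Nat.cast_smul_eq_nsmul,
          Int.cast_smul_eq_zsmul]
        exact S.zsmul_mem hv _ }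
  have hle : Submodule.span ℚ (S : Set V) ≤ saturation := Submodule.span_le.2 fun v hv =>
    show ∃ N : ℕ, 0 < N ∧ N • v ∈ S from ⟨1, one_pos, by simpa using hv⟩
  exact hle hv

theorem AddSubgroup.exists_common_nsmul_mem {G ι : Type*} [AddCommGroup G]
    (S : AddSubgroup G) (s : Finset ι) (v : ι → G)
    (h : ∀ i ∈ s, ∃ N : ℕ, 0 < N ∧ N • v i ∈ S) :
    ∃ N : ℕ, 0 < N ∧ ∀ i ∈ s, N • v i ∈ S := by
  classical
  choose! N hN hNv using h
  refine ⟨∏ i ∈ s, N i, Finset.prod_pos hN, fun i hi => ?_⟩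
  rw [← Finset.mul_prod_erase s N hi, mul_nsmul]
  exact S.nsmul_mem (hNv i hi) _

namespace Matrix

variable {n : ℕ} {R : Type*}

def IsSupportedAbove [Zero R] (d : ℕ) (A : Matrix (Fin n) (Fin n) R) : Prop :=
  ∀ i j : Fin n, (j : ℕ) < i + d → A i j = 0

namespace IsSupportedAbove

variable {d e : ℕ} {A B : Matrix (Fin n) (Fin n) R}

theorem mono [Zero R] (hA : IsSupportedAbove d A) (h : e ≤ d) : IsSupportedAbove e A :=
  fun i j hj => hA i j (by omega)

theorem add [AddZeroClass R] (hA : IsSupportedAbove d A) (hB : IsSupportedAbove d B) :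
    IsSupportedAbove d (A + B) :=
  fun i j hj => by simp [hA i j hj, hB i j hj]

theorem sub [AddGroup R] (hA : IsSupportedAbove d A) (hB : IsSupportedAbove d B) :
    IsSupportedAbove d (A - B) :=
  fun i j hj => by simp [hA i j hj, hB i j hj]

theorem neg [AddGroup R] (hA : IsSupportedAbove d A) : IsSupportedAbove d (-A) :=
  fun i j hj => by simp [hA i j hj]

theorem mul [NonUnitalNonAssocSemiring R] (hA : IsSupportedAbove d A)
    (hB : IsSupportedAbove e B) : IsSupportedAbove (d + e) (A * B) := by
  intro i j hj
  rw [mul_apply]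
  refine Finset.sum_eq_zero fun r _ => ?_
  by_cases hr : (r : ℕ) < i + d
  · rw [hA i r hr, zero_mul]
  · rw [hB r j (by omega), mul_zero]

theorem eq_zero [Zero R] (hA : IsSupportedAbove d A) (hd : n ≤ d) : A = 0 := by
  ext i j
  exact hA i j (by omega)

end IsSupportedAbove

theorem isSupportedAbove_zero_iff [Zero R] {A : Matrix (Fin n) (Fin n) R} :
    IsSupportedAbove 0 A ↔ A.BlockTriangular id :=
  ⟨fun h _ _ hij => h _ _ hij, fun h _ _ hij => h hij⟩

def band [Semiring R] (d : ℕ) : Matrix (Fin n) (Fin n) R →ₗ[R] Matrix (Fin n) (Fin n) R where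
  toFun A := of fun i j => if (j : ℕ) = i + d then A i j else 0
  map_add' A B := by ext i j; by_cases h : (j : ℕ) = i + d <;> simp [h]
  map_smul' c A := by ext i j; by_cases h : (j : ℕ) = i + d <;> simp [h]

section Band

variable [Semiring R] {d e : ℕ} {A B : Matrix (Fin n) (Fin n) R}

@[simp]
theorem band_apply (i j : Fin n) : band d A i j = if (j : ℕ) = i + d then A i j else 0 := rfl

@[simp]
theorem band_one (hd : d ≠ 0) : band d (1 : Matrix (Fin n) (Fin n) R) = 0 := by
  ext i j
  by_cases h : (j : ℕ) = i + d
  · simp [h, one_apply_ne (Fin.ne_of_val_ne (by omega : (i : ℕ) ≠ j))]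
  · simp [h]

theorem band_eq_zero (hA : IsSupportedAbove (d + 1) A) : band d A = 0 := by
  ext i j
  by_cases h : (j : ℕ) = i + d
  · simp [h, hA i j (by omega)]
  · simp [h]

theorem IsSupportedAbove.succ (hA : IsSupportedAbove d A) (hband : band d A = 0) :
    IsSupportedAbove (d + 1) A := by
  intro i j hj
  rcases Nat.lt_or_ge (j : ℕ) (i + d) with h | h
  · exact hA i j h
  · simpa [show (j : ℕ) = i + d by omega] using congr_fun₂ hband i j

theorem band_single (i j : Fin n) (hij : (j : ℕ) = i + d) (c : R) :
    band d (single i j c) = single i j c := by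
  ext a b
  by_cases h : i = a ∧ j = b
  · obtain ⟨rfl, rfl⟩ := h
    simp [hij]
  · simp [h]

theorem band_mul (hA : IsSupportedAbove d A) (hB : IsSupportedAbove e B) :
    band (d + e) (A * B) = band d A * band e B := by
  ext i j
  simp only [band_apply, mul_apply]
  split_ifs with hj
  · refine Finset.sum_congr rfl fun r _ => ?_
    rcases lt_trichotomy (r : ℕ) (i + d) with h | h | h
    · simp [hA i r h]
    · simp [h, show (j : ℕ) = i + d + e by omega]
    · simp [hB r j (by omega), show (j : ℕ) ≠ r + e by omega]
  · refine (Finset.sum_eq_zero fun r _ => ?_).symm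
    split_ifs <;> first | omega | simp

end Band

theorem band_mem_of_forall_nsmul_single_mem [Ring R] {S : AddSubgroup (Matrix (Fin n) (Fin n) R)}
    {d N : ℕ} (hS : ∀ i j : Fin n, (j : ℕ) = i + d → N • single i j (1 : R) ∈ S)
    {A : Matrix (Fin n) (Fin n) R} (hA : ∀ i j, ∃ a : ℤ, A i j = N * a) : band d A ∈ S := by
  rw [matrix_eq_sum_single (band d A)]
  refine S.sum_mem fun i _ => S.sum_mem fun j _ => ?_
  by_cases hij : (j : ℕ) = i + d
  · obtain ⟨a, ha⟩ := hA i j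
    have : single i j (band d A i j) = a • N • single i j (1 : R) := by
      rw [band_apply, if_pos hij, ha, smul_single, smul_single]
      simp [Int.cast_comm a (N : R)]
    rw [this]
    exact S.zsmul_mem (hS i j hij) a
  · simp [hij]

end Matrix

namespace Matrix.SpecialLinearGroup

open scoped commutatorElement

section Unitriangular

variable {n : ℕ} {R : Type*} [CommRing R]

theorem coe_mul_sub_one (x y : SpecialLinearGroup (Fin n) R) :
    (x * y).val - 1 = (x.val - 1) + (y.val - 1) + (x.val - 1) * (y.val - 1) := by
  rw [coe_mul]
  noncomm_ring

theorem isSupportedAbove_zero_coe_inv {x : SpecialLinearGroup (Fin n) R}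
    (hx : IsSupportedAbove 1 (x.val - 1)) : IsSupportedAbove 0 (x⁻¹).val := by
  have hxT : x.val.BlockTriangular id := isSupportedAbove_zero_iff.1 <| by
    simpa using (hx.mono zero_le_one).add (isSupportedAbove_zero_iff.2 blockTriangular_one)
  have hinv : (x⁻¹).val * x.val = 1 := congr_arg Subtype.val (inv_mul_cancel x)
  let := invertibleOfLeftInverse _ _ hinv
  rw [← inv_eq_left_inv hinv]
  exact isSupportedAbove_zero_iff.2 (blockTriangular_inv_of_blockTriangular hxT)

-- `x - 1` vanishes on and below the `d`-th superdiagonal, so `unitriangular 0` is the group `U`.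
def unitriangular (d : ℕ) : Subgroup (SpecialLinearGroup (Fin n) R) where
  carrier := {x | IsSupportedAbove (d + 1) (x.val - 1)}
  one_mem' := fun i j _ => by simp
  mul_mem' {x y} hx hy := by
    simpa only [Set.mem_ofPred_eq, coe_mul_sub_one] using
      (hx.add hy).add ((hx.mul hy).mono (by omega))
  inv_mem' {x} hx := by
    have h : (x⁻¹).val - 1 = -((x.val - 1) * (x⁻¹).val) := by
      have : x.val * (x⁻¹).val = 1 := congr_arg Subtype.val (mul_inv_cancel x)
      rw [sub_mul, this, one_mul, neg_sub]
    simpa only [Set.mem_ofPred_eq, h] using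
      (hx.mul (isSupportedAbove_zero_coe_inv (hx.mono (by omega)))).neg

variable {d e : ℕ} {x y : SpecialLinearGroup (Fin n) R}

theorem mem_unitriangular :
    x ∈ unitriangular d ↔ IsSupportedAbove (d + 1) (x.val - 1) :=
  Iff.rfl

theorem unitriangular_anti (h : d ≤ e) :
    unitriangular e ≤ (unitriangular d : Subgroup (SpecialLinearGroup (Fin n) R)) :=
  fun _ hx => IsSupportedAbove.mono hx (by omega)

theorem unitriangular_eq_bot (h : n ≤ d + 1) :
    (unitriangular d : Subgroup (SpecialLinearGroup (Fin n) R)) = ⊥ := by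
  refine (Subgroup.eq_bot_iff_forall _).2 fun x hx => Subtype.ext ?_
  simpa [sub_eq_zero] using IsSupportedAbove.eq_zero hx h

theorem band_coe_mul_sub_one (hx : x ∈ unitriangular d) (hy : y ∈ unitriangular d) :
    band (d + 1) ((x * y).val - 1) = band (d + 1) (x.val - 1) + band (d + 1) (y.val - 1) := by
  rw [coe_mul_sub_one, map_add, map_add,
    band_eq_zero ((IsSupportedAbove.mul hx hy).mono (by omega)), add_zero]

theorem band_coe_inv_sub_one (hx : x ∈ unitriangular d) :
    band (d + 1) ((x⁻¹).val - 1) = -band (d + 1) (x.val - 1) := by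
  refine eq_neg_of_add_eq_zero_left ?_
  rw [← band_coe_mul_sub_one (inv_mem hx) hx, inv_mul_cancel, coe_one, sub_self, map_zero]

theorem band_coe_pow_sub_one (hx : x ∈ unitriangular d) (m : ℕ) :
    band (d + 1) ((x ^ m).val - 1) = m • band (d + 1) (x.val - 1) := by
  induction m with
  | zero => simp
  | succ m ih => rw [pow_succ, band_coe_mul_sub_one (pow_mem hx m) hx, ih, succ_nsmul]

theorem mem_unitriangular_succ (hx : x ∈ unitriangular d)
    (h : band (d + 1) (x.val - 1) = 0) : x ∈ unitriangular (d + 1) :=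
  IsSupportedAbove.succ hx h

theorem exists_coe_commutatorElement_sub_one_eq (hx : x ∈ unitriangular d)
    (hy : y ∈ unitriangular e) : ∃ W, IsSupportedAbove (d + e + 3) W ∧
      (⁅x, y⁆ : SpecialLinearGroup (Fin n) R).val - 1 =
        (x.val - 1) * (y.val - 1) - (y.val - 1) * (x.val - 1) + W := by
  have hC : IsSupportedAbove (d + e + 2)
      ((x.val - 1) * (y.val - 1) - (y.val - 1) * (x.val - 1)) :=
    ((IsSupportedAbove.mul hx hy).sub ((IsSupportedAbove.mul hy hx).mono (by omega))).mono
      (by omega)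
  have hyx : (y * x)⁻¹ ∈ unitriangular 0 :=
    inv_mem (mul_mem (unitriangular_anti (Nat.zero_le e) hy)
      (unitriangular_anti (Nat.zero_le d) hx))
  refine ⟨_, (hC.mul hyx).mono (by omega), ?_⟩
  have hcomm : ⁅x, y⁆ = x * y * (y * x)⁻¹ := by rw [commutatorElement_def]; group
  have hinv : y.val * x.val * ((y * x)⁻¹).val = 1 :=
    congr_arg Subtype.val (mul_inv_cancel (y * x))
  calc (⁅x, y⁆ : SpecialLinearGroup (Fin n) R).val - 1
      = x.val * y.val * ((y * x)⁻¹).val - y.val * x.val * ((y * x)⁻¹).val := by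
        rw [hinv, hcomm]; rfl
    _ = _ := by noncomm_ring

theorem commutatorElement_mem_unitriangular (hx : x ∈ unitriangular d)
    (hy : y ∈ unitriangular e) : ⁅x, y⁆ ∈ unitriangular (d + e + 1) := by
  obtain ⟨W, hW, hcomm⟩ := exists_coe_commutatorElement_sub_one_eq hx hy
  rw [mem_unitriangular, hcomm]
  exact ((IsSupportedAbove.mul hx hy).sub ((IsSupportedAbove.mul hy hx).mono (by omega))).add
    (hW.mono (by omega)) |>.mono (by omega)

theorem band_coe_commutatorElement_sub_one (hx : x ∈ unitriangular d)
    (hy : y ∈ unitriangular e) :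
    band (d + e + 2) ((⁅x, y⁆ : SpecialLinearGroup (Fin n) R).val - 1) =
      band (d + 1) (x.val - 1) * band (e + 1) (y.val - 1) -
        band (e + 1) (y.val - 1) * band (d + 1) (x.val - 1) := by
  obtain ⟨W, hW, hcomm⟩ := exists_coe_commutatorElement_sub_one_eq hx hy
  rw [hcomm, map_add, band_eq_zero hW, add_zero, map_sub,
    show d + e + 2 = d + 1 + (e + 1) by omega, band_mul hx hy,
    show d + 1 + (e + 1) = e + 1 + (d + 1) by omega, band_mul hy hx]

-- The image of `H ∩ U_d` in the abelian group `U_d / U_{d+1}`, read off as a superdiagonal.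
def bandImage (H : Subgroup (SpecialLinearGroup (Fin n) R)) (d : ℕ) :
    AddSubgroup (Matrix (Fin n) (Fin n) R) where
  carrier := (fun x : SpecialLinearGroup (Fin n) R => band (d + 1) (x.val - 1)) ''
    ((H ⊓ unitriangular d : Subgroup _) : Set _)
  zero_mem' := ⟨1, one_mem _, by simp⟩
  add_mem' := by
    rintro _ _ ⟨x, hx, rfl⟩ ⟨y, hy, rfl⟩
    exact ⟨x * y, mul_mem hx hy, band_coe_mul_sub_one hx.2 hy.2⟩
  neg_mem' := by
    rintro _ ⟨x, hx, rfl⟩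
    exact ⟨x⁻¹, inv_mem hx, band_coe_inv_sub_one hx.2⟩

variable {H K : Subgroup (SpecialLinearGroup (Fin n) R)} {A B : Matrix (Fin n) (Fin n) R}

theorem mem_bandImage :
    A ∈ bandImage H d ↔ ∃ x ∈ H ⊓ unitriangular d, band (d + 1) (x.val - 1) = A :=
  Iff.rfl

theorem mul_sub_mul_mem_bandImage (hA : A ∈ bandImage H d) (hB : B ∈ bandImage H e) :
    A * B - B * A ∈ bandImage H (d + e + 1) := by
  obtain ⟨x, hx, rfl⟩ := hA
  obtain ⟨y, hy, rfl⟩ := hB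
  have hxy : ⁅x, y⁆ ∈ H := by
    rw [commutatorElement_def]
    exact mul_mem (mul_mem (mul_mem hx.1 hy.1) (inv_mem hx.1)) (inv_mem hy.1)
  exact ⟨⁅x, y⁆, ⟨hxy, commutatorElement_mem_unitriangular hx.2 hy.2⟩,
    band_coe_commutatorElement_sub_one hx.2 hy.2⟩

theorem nsmul_mem_bandImage_inf {m : ℕ} (hK : ∀ x ∈ H ⊓ unitriangular d, x ^ m ∈ K)
    (hA : A ∈ bandImage H d) : m • A ∈ bandImage (H ⊓ K) d := by
  obtain ⟨x, hx, rfl⟩ := hA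
  exact ⟨x ^ m, ⟨⟨pow_mem hx.1 m, hK x hx⟩, pow_mem hx.2 m⟩,
    band_coe_pow_sub_one hx.2 m⟩

end Unitriangular

section Congruence

variable {ι : Type*} [Fintype ι] [DecidableEq ι]

def congruenceSubgroup (k : ℕ) : Subgroup (SpecialLinearGroup ι ℚ) :=
  ((map (Int.castRingHom (ZMod k))).ker).map (map (Int.castRingHom ℚ))

theorem mem_congruenceSubgroup_iff {k : ℕ} {x : SpecialLinearGroup ι ℚ} :
    x ∈ congruenceSubgroup k ↔ ∀ i j, ∃ a : ℤ, (x.val - 1) i j = k * a := by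
  constructor
  · rintro ⟨y, hy, rfl⟩ i j
    obtain ⟨a, ha⟩ : (k : ℤ) ∣ y.val i j - (1 : Matrix ι ι ℤ) i j := by
      rw [← ZMod.intCast_zmod_eq_zero_iff_dvd, Int.cast_sub, sub_eq_zero]
      simpa [one_apply, apply_ite] using congr_fun₂ (congr_arg Subtype.val hy) i j
    refine ⟨a, ?_⟩
    have := congr_arg (Int.cast : ℤ → ℚ) ha
    push_cast at this
    rw [← this]
    rcases eq_or_ne i j with rfl | hij <;> simp [*]
  · intro h
    choose a ha using h
    let B : Matrix ι ι ℤ := 1 + (k : ℤ) • of a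
    have hB : (Int.castRingHom ℚ).mapMatrix B = x.val := by
      ext i j
      rw [← sub_add_cancel (x.val i j) ((1 : Matrix ι ι ℚ) i j), ← sub_apply, ha]
      rcases eq_or_ne i j with rfl | hij <;> simp [B, *, add_comm]
    have hdet : B.det = 1 := Int.cast_injective (α := ℚ) <| by
      rw [Int.cast_one, ← eq_intCast (Int.castRingHom ℚ), RingHom.map_det, hB, x.2]
    refine ⟨⟨B, hdet⟩, Subtype.ext ?_, Subtype.ext hB⟩
    change (Int.castRingHom (ZMod k)).mapMatrix B = 1
    ext i j
    rcases eq_or_ne i j with rfl | hij <;> simp [B, *]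

theorem congruenceSubgroup_le_of_dvd {k K : ℕ} (h : k ∣ K) :
    congruenceSubgroup K ≤ (congruenceSubgroup k : Subgroup (SpecialLinearGroup ι ℚ)) := by
  obtain ⟨c, rfl⟩ := h
  intro x hx
  rw [mem_congruenceSubgroup_iff] at hx ⊢
  intro i j
  obtain ⟨a, ha⟩ := hx i j
  exact ⟨c * a, by rw [ha]; push_cast; ring⟩

theorem exists_pow_mem_congruenceSubgroup (k : ℕ) [NeZero k] :
    ∃ m : ℕ, 0 < m ∧
      ∀ x ∈ congruenceSubgroup (ι := ι) 1, x ^ m ∈ congruenceSubgroup k := by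
  refine ⟨Monoid.exponent (SpecialLinearGroup ι (ZMod k)),
    Nat.pos_of_ne_zero Monoid.exponent_ne_zero_of_finite, ?_⟩
  rintro _ ⟨y, -, rfl⟩
  exact ⟨y ^ _, by simp [MonoidHom.mem_ker, Monoid.pow_exponent_eq_one], map_pow _ _ _⟩

end Congruence

end Matrix.SpecialLinearGroup

open Matrix Matrix.SpecialLinearGroup

variable {n : ℕ}

theorem isUnitriangular_iff {x : SpecialLinearGroup (Fin n) ℚ} :
    IsUnitriangular x ↔ x ∈ unitriangular 0 := by
  refine ⟨fun hx i j hij => ?_, fun hx => ⟨fun i => ?_, fun i j hij => ?_⟩⟩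
  · rcases eq_or_ne i j with rfl | hne
    · simp [hx.1 i]
    · simp [hne, hx.2 i j (Fin.lt_def.2 (by omega))]
  · simpa [sub_eq_zero] using hx i i (by omega)
  · simpa [(Fin.ne_of_lt hij).symm] using hx i j (by omega)

theorem linearMap_eq_zero_of_dense {Λ : Subgroup (SpecialLinearGroup (Fin n) ℚ)}
    (hdense : ∀ p : MvPolynomial (Fin n × Fin n) ℚ,
      (∀ x ∈ Λ, IsUnitriangular x → MvPolynomial.eval (fun q => x.val q.1 q.2) p = 0) →
      ∀ x : Matrix.SpecialLinearGroup (Fin n) ℚ, IsUnitriangular x →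
        MvPolynomial.eval (fun q => x.val q.1 q.2) p = 0)
    (L : Matrix (Fin n) (Fin n) ℚ →ₗ[ℚ] ℚ)
    (hL : ∀ x ∈ Λ ⊓ unitriangular 0, L x.val = 0) :
    ∀ x ∈ unitriangular 0, L x.val = 0 := by
  let P : MvPolynomial (Fin n × Fin n) ℚ :=
    ∑ q, MvPolynomial.C (L (single q.1 q.2 1)) * MvPolynomial.X q
  have hP (A : Matrix (Fin n) (Fin n) ℚ) : MvPolynomial.eval (fun q => A q.1 q.2) P = L A := by
    have hsingle (i j : Fin n) (a : ℚ) : L (single i j a) = L (single i j 1) * a := by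
      rw [mul_comm, ← smul_eq_mul, ← L.map_smul, smul_single, smul_eq_mul, mul_one]
    conv_rhs => rw [matrix_eq_sum_single A]
    simp only [P, map_sum, map_mul, MvPolynomial.eval_C, MvPolynomial.eval_X,
      Fintype.sum_prod_type]
    exact Finset.sum_congr rfl fun i _ => Finset.sum_congr rfl fun j _ => (hsingle i j _).symm
  intro x hx
  rw [← hP]
  exact hdense P (fun y hy hyU => by rw [hP]; exact hL y ⟨hy, isUnitriangular_iff.1 hyU⟩) x
    (isUnitriangular_iff.2 hx)

section Lattice

variable {Λ : Subgroup (SpecialLinearGroup (Fin n) ℚ)}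

theorem exists_nsmul_single_mem_bandImage_zero
    (hdense : ∀ L : Matrix (Fin n) (Fin n) ℚ →ₗ[ℚ] ℚ,
      (∀ x ∈ Λ ⊓ unitriangular 0, L x.val = 0) → ∀ x ∈ unitriangular 0, L x.val = 0)
    {i j : Fin n} (hij : (j : ℕ) = i + 1) :
    ∃ N : ℕ, 0 < N ∧ N • single i j (1 : ℚ) ∈ bandImage Λ 0 := by
  refine (bandImage Λ 0).exists_nsmul_mem_of_mem_span_rat (by_contra fun hspan => ?_)
  obtain ⟨f, hf, hmap⟩ := Submodule.exists_dual_map_eq_bot_of_notMem hspan inferInstance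
  have hvanish : ∀ x ∈ Λ ⊓ unitriangular 0, (f ∘ₗ band 1) x.val = 0 := by
    intro x hx
    have : f (band 1 (x.val - 1)) ∈ (Submodule.span ℚ (bandImage Λ 0 : Set _)).map f :=
      Submodule.mem_map_of_mem (Submodule.subset_span ⟨x, hx, rfl⟩)
    simpa [hmap] using this
  have hne : i ≠ j := Fin.ne_of_val_ne (by omega)
  have htrans : SpecialLinearGroup.transvection hne (1 : ℚ) ∈ unitriangular 0 := by
    intro a b hab
    rw [transvection_coe, add_sub_cancel_left, single_apply, if_neg]
    rintro ⟨rfl, rfl⟩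
    omega
  apply hf
  simpa [transvection_coe, band_single i j hij] using hdense _ hvanish _ htrans

theorem exists_nsmul_single_mem_bandImage
    (hdense : ∀ L : Matrix (Fin n) (Fin n) ℚ →ₗ[ℚ] ℚ,
      (∀ x ∈ Λ ⊓ unitriangular 0, L x.val = 0) → ∀ x ∈ unitriangular 0, L x.val = 0) :
    ∀ (d : ℕ) (i j : Fin n), (j : ℕ) = i + d + 1 →
      ∃ N : ℕ, 0 < N ∧ N • single i j (1 : ℚ) ∈ bandImage Λ d
  | 0, _, _, hij => exists_nsmul_single_mem_bandImage_zero hdense hij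
  | d + 1, i, l, hil => by
    let j : Fin n := ⟨i + d + 1, by omega⟩
    obtain ⟨N, hN, hNmem⟩ := exists_nsmul_single_mem_bandImage hdense d i j rfl
    obtain ⟨M, hM, hMmem⟩ :=
      exists_nsmul_single_mem_bandImage_zero hdense (i := j) (j := l) (by simp [j]; omega)
    have hli : l ≠ i := Fin.ne_of_val_ne (by omega)
    refine ⟨N * M, Nat.mul_pos hN hM, ?_⟩
    simpa [mul_nsmul', hli] using mul_sub_mul_mem_bandImage hNmem hMmem

theorem exists_unitriangular_inf_congruenceSubgroup_le_of_succ
    (hint : Λ ⊓ unitriangular 0 ≤ congruenceSubgroup 1) {d : ℕ}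
    (hgen : ∀ i j : Fin n, (j : ℕ) = i + d + 1 →
      ∃ N : ℕ, 0 < N ∧ N • single i j (1 : ℚ) ∈ bandImage Λ d)
    {k : ℕ} (hk : 0 < k) (hΛ : unitriangular (d + 1) ⊓ congruenceSubgroup k ≤ Λ) :
    ∃ K : ℕ, 0 < K ∧ unitriangular d ⊓ congruenceSubgroup K ≤ Λ := by
  have : NeZero k := ⟨hk.ne'⟩
  obtain ⟨m, hm, hpow⟩ := exists_pow_mem_congruenceSubgroup (ι := Fin n) k
  have hpowΛ : ∀ x ∈ Λ ⊓ unitriangular d, x ^ m ∈ congruenceSubgroup k :=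
    fun x hx => hpow x (hint ⟨hx.1, unitriangular_anti (Nat.zero_le d) hx.2⟩)
  obtain ⟨N, hN, hNmem⟩ := (bandImage (Λ ⊓ congruenceSubgroup k) d).exists_common_nsmul_mem
    (Finset.univ.filter fun p : Fin n × Fin n => (p.2 : ℕ) = p.1 + d + 1)
    (fun p => single p.1 p.2 1) <| by
      rintro ⟨i, j⟩ hij
      obtain ⟨M, hM, hMmem⟩ := hgen i j (Finset.mem_filter.1 hij).2
      refine ⟨M * m, Nat.mul_pos hM hm, ?_⟩
      rw [mul_nsmul]
      exact nsmul_mem_bandImage_inf hpowΛ hMmem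
  refine ⟨k * N, Nat.mul_pos hk hN, fun x hx => ?_⟩
  obtain ⟨hxU, hxC⟩ := Subgroup.mem_inf.1 hx
  have hband : band (d + 1) (x.val - 1) ∈ bandImage (Λ ⊓ congruenceSubgroup k) d := by
    refine band_mem_of_forall_nsmul_single_mem
      (fun i j hij => hNmem (i, j) (Finset.mem_filter.2 ⟨Finset.mem_univ _, hij⟩)) fun i j => ?_
    obtain ⟨a, ha⟩ := mem_congruenceSubgroup_iff.1 hxC i j
    exact ⟨k * a, by rw [ha]; push_cast; ring⟩
  obtain ⟨y, hyΛCU, hy⟩ := mem_bandImage.1 hband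
  obtain ⟨hyΛC, hyU⟩ := Subgroup.mem_inf.1 hyΛCU
  obtain ⟨hyΛ, hyC⟩ := Subgroup.mem_inf.1 hyΛC
  have hyx : y⁻¹ * x ∈ unitriangular (d + 1) ⊓ congruenceSubgroup k := by
    refine Subgroup.mem_inf.2 ⟨mem_unitriangular_succ (mul_mem (inv_mem hyU) hxU) ?_,
      mul_mem (inv_mem hyC) (congruenceSubgroup_le_of_dvd (dvd_mul_right k N) hxC)⟩
    rw [band_coe_mul_sub_one (inv_mem hyU) hxU, band_coe_inv_sub_one hyU, hy, neg_add_cancel]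
  simpa using mul_mem hyΛ (hΛ hyx)

theorem exists_unitriangular_inf_congruenceSubgroup_le
    (hint : Λ ⊓ unitriangular 0 ≤ congruenceSubgroup 1)
    (hgen : ∀ (d : ℕ) (i j : Fin n), (j : ℕ) = i + d + 1 →
      ∃ N : ℕ, 0 < N ∧ N • single i j (1 : ℚ) ∈ bandImage Λ d) :
    ∃ k : ℕ, 0 < k ∧ unitriangular 0 ⊓ congruenceSubgroup k ≤ Λ := by
  suffices h : ∀ m d, n ≤ d + m + 1 →
      ∃ k : ℕ, 0 < k ∧ unitriangular d ⊓ congruenceSubgroup k ≤ Λ from h n 0 (by omega)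
  intro m
  induction m with
  | zero =>
    intro d hd
    exact ⟨1, one_pos, by simp [unitriangular_eq_bot (show n ≤ d + 1 by omega)]⟩
  | succ m ih =>
    intro d hd
    obtain ⟨k, hk, hle⟩ := ih (d + 1) (by omega)
    exact exists_unitriangular_inf_congruenceSubgroup_le_of_succ hint (hgen d) hk hle

end Lattice

theorem stmt8_general (n : ℕ) (Λ : Subgroup (Matrix.SpecialLinearGroup (Fin n) ℚ))
    (hint : ∀ x ∈ Λ, IsUnitriangular x → ∀ i j : Fin n, ∃ a : ℤ, x.val i j = (a : ℚ))
    (hdense : ∀ p : MvPolynomial (Fin n × Fin n) ℚ,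
      (∀ x ∈ Λ, IsUnitriangular x → MvPolynomial.eval (fun q => x.val q.1 q.2) p = 0) →
      ∀ x : Matrix.SpecialLinearGroup (Fin n) ℚ, IsUnitriangular x →
        MvPolynomial.eval (fun q => x.val q.1 q.2) p = 0) :
    ∃ k : ℤ, 1 ≤ k ∧ ∀ x : Matrix.SpecialLinearGroup (Fin n) ℚ, IsUnitriangular x →
      (∀ i j : Fin n, i ≠ j → ∃ a : ℤ, x.val i j = ((k * a : ℤ) : ℚ)) → x ∈ Λ := by
  have hintegral : Λ ⊓ unitriangular 0 ≤ congruenceSubgroup 1 := fun x hx =>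
    mem_congruenceSubgroup_iff.2 fun i j => by
      obtain ⟨a, ha⟩ := hint x hx.1 (isUnitriangular_iff.2 hx.2) i j
      rcases eq_or_ne i j with rfl | hij
      · exact ⟨a - 1, by simp [ha]⟩
      · exact ⟨a, by simp [ha, hij]⟩
  obtain ⟨k, hk, hle⟩ := exists_unitriangular_inf_congruenceSubgroup_le hintegral
    (exists_nsmul_single_mem_bandImage (linearMap_eq_zero_of_dense hdense))
  refine ⟨k, by exact_mod_cast hk, fun x hx hdiv => hle ⟨isUnitriangular_iff.1 hx,
    mem_congruenceSubgroup_iff.2 fun i j => ?_⟩⟩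
  rcases eq_or_ne i j with rfl | hij
  · exact ⟨0, by simp [hx.1 i]⟩
  · obtain ⟨a, ha⟩ := hdiv i j hij
    exact ⟨a, by simp [ha, hij]⟩

/-- **Theorem.** Let `n ≥ 3` and `Λ ≤ SL(n,ℚ)` a subgroup whose intersection with the group
`U` of upper unitriangular matrices consists of integer matrices and is Zariski-dense in `U`
(every polynomial in the matrix entries vanishing on `Λ ∩ U` vanishes on `U`). Then `Λ`
contains `U(kℤ)` (integer unitriangular matrices with off-diagonal entries divisible by `k`)
for some `k ≥ 1`. -/
theorem stmt8 (n : ℕ) (hn : 3 ≤ n) (Λ : Subgroup (Matrix.SpecialLinearGroup (Fin n) ℚ))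
    (hint : ∀ x ∈ Λ, IsUnitriangular x → ∀ i j : Fin n, ∃ a : ℤ, x.val i j = (a : ℚ))
    (hdense : ∀ p : MvPolynomial (Fin n × Fin n) ℚ,
      (∀ x ∈ Λ, IsUnitriangular x → MvPolynomial.eval (fun q => x.val q.1 q.2) p = 0) →
      ∀ x : Matrix.SpecialLinearGroup (Fin n) ℚ, IsUnitriangular x →
        MvPolynomial.eval (fun q => x.val q.1 q.2) p = 0) :
    ∃ k : ℤ, 1 ≤ k ∧ ∀ x : Matrix.SpecialLinearGroup (Fin n) ℚ, IsUnitriangular x →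
      (∀ i j : Fin n, i ≠ j → ∃ a : ℤ, x.val i j = ((k * a : ℤ) : ℚ)) → x ∈ Λ :=
  stmt8_general n Λ hint hdense
end

section
/- Let n ≥ 3 and k, d ≥ 1. If a subgroup Λ of SL(n,ℚ) contains the elementary matrix e_{n,1}(k) and contains e_{i,j}(d) for all 1 ≤ i < j ≤ n, then Λ contains e_{i,j}(k d²) for all 1 ≤ i ≠ j ≤ n. -/
/-!
Commutators of transvections in `SL(n)` satisfy `⁅e_{a,b}(s), e_{b,c}(t)⁆ = e_{a,c}(st)` for
distinct `a, b, c`, and `e_{a,b}(s)^m = e_{a,b}(ms)`. Above the diagonal, `e_{i,j}(kd²)` is the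
power `e_{i,j}(d)^{kd}`. In the first column, `e_{i,1}(dk)` is `e_{n,1}(k)^d` for `i = n` and
`⁅e_{i,n}(d), e_{n,1}(k)⁆` otherwise; its `d`-th power is `e_{i,1}(kd²)`, and for `1 < j < i`
the commutator `⁅e_{i,1}(dk), e_{1,j}(d)⁆` is `e_{i,j}(kd²)`.
-/

/-- The elementary matrix `e_{i,j}(t)` as an element of `SL(n, ℚ)`. -/
def ElemQ {n : ℕ} (i j : Fin n) (hij : i ≠ j) (t : ℚ) :
    Matrix.SpecialLinearGroup (Fin n) ℚ :=
  ⟨Matrix.transvection i j t, Matrix.det_transvection_of_ne i j hij t⟩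

open scoped commutatorElement

namespace Matrix.SpecialLinearGroup

variable {ι F : Type*} [DecidableEq ι] [Fintype ι] [CommRing F]

lemma transvection_zpow {i j : ι} (hij : i ≠ j) (b : F) (m : ℤ) :
    transvection hij b ^ m = transvection hij (m • b) := by
  induction m using Int.induction_on with
  | zero => simp [transvection_coeff_zero]
  | succ m ih => rw [_root_.zpow_add_one, ih, ← transvection_add, add_smul, one_smul]
  | pred m ih =>
    rw [_root_.zpow_sub_one, ih, transvection_inv, ← transvection_add, sub_smul, one_smul,
      sub_eq_add_neg]

lemma commutator_transvection_transvection {a b c : ι} (hab : a ≠ b) (hbc : b ≠ c)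
    (hac : a ≠ c) (s t : F) :
    ⁅transvection hab s, transvection hbc t⁆ = transvection hac (s * t) := by
  rw [commutatorElement_def, transvection_inv, transvection_inv]
  refine Subtype.ext ?_
  simp only [coe_mul, transvection_coe, add_mul, mul_add, one_mul, mul_one,
    single_mul_single_same, single_mul_single_of_ne _ _ _ _ hab.symm,
    single_mul_single_of_ne _ _ _ _ hbc.symm, single_mul_single_of_ne _ _ _ _ hac.symm,
    add_zero, neg_mul, mul_neg, ← single_neg]
  abel

variable {Λ : Subgroup (SpecialLinearGroup ι F)}

lemma transvection_zsmul_mem {i j : ι} {hij : i ≠ j} {b : F} (hb : transvection hij b ∈ Λ)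
    (m : ℤ) : transvection hij (m • b) ∈ Λ :=
  transvection_zpow hij b m ▸ zpow_mem hb m

lemma transvection_mul_mem {a b c : ι} {hab : a ≠ b} {hbc : b ≠ c} (hac : a ≠ c) {s t : F}
    (hs : transvection hab s ∈ Λ) (ht : transvection hbc t ∈ Λ) :
    transvection hac (s * t) ∈ Λ := by
  rw [← commutator_transvection_transvection hab hbc hac, commutatorElement_def]
  exact mul_mem (mul_mem (mul_mem hs ht) (inv_mem hs)) (inv_mem ht)

end Matrix.SpecialLinearGroup

open Matrix.SpecialLinearGroup

lemma ElemQ_eq_transvection {n : ℕ} {i j : Fin n} (hij : i ≠ j) (t : ℚ) :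
    ElemQ i j hij t = transvection hij t :=
  rfl

/-- **Theorem.** Let `n ≥ 3` and `k, d ≥ 1`. If a subgroup `Λ` of `SL(n,ℚ)` contains
`e_{n,1}(k)` and `e_{i,j}(d)` for all `1 ≤ i < j ≤ n`, then `Λ` contains `e_{i,j}(kd²)`
for all `1 ≤ i ≠ j ≤ n`. -/
theorem stmt9 (n : ℕ) (hn : 3 ≤ n) (k d : ℤ)
    (Λ : Subgroup (Matrix.SpecialLinearGroup (Fin n) ℚ))
    (h1 : ElemQ (⟨n - 1, by omega⟩ : Fin n) ⟨0, by omega⟩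
        (Fin.ne_of_val_ne (by simp only [Fin.val_mk]; omega)) ((k : ℚ)) ∈ Λ)
    (h2 : ∀ i j : Fin n, (hij : i < j) → ElemQ i j (ne_of_lt hij) ((d : ℚ)) ∈ Λ) :
    ∀ i j : Fin n, (hij : i ≠ j) → ElemQ i j hij (((k * d ^ 2 : ℤ) : ℚ)) ∈ Λ := by
  simp only [ElemQ_eq_transvection] at h1 h2 ⊢
  set l : Fin n := ⟨n - 1, by omega⟩
  set z : Fin n := ⟨0, by omega⟩
  have first_column : ∀ i (hiz : i ≠ z), transvection hiz ((d : ℚ) * k) ∈ Λ := by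
    intro i hiz
    rcases eq_or_ne i l with rfl | hil
    · simpa [zsmul_eq_mul] using transvection_zsmul_mem h1 d
    · have hil' : i < l := lt_of_le_of_ne (Nat.le_sub_one_of_lt i.isLt) hil
      exact transvection_mul_mem hiz (h2 i l hil') h1
  intro i j hij
  rcases hij.lt_or_gt with hij' | hji
  · convert transvection_zsmul_mem (h2 i j hij') (k * d) using 2
    push_cast [zsmul_eq_mul]; ring
  have hiz : i ≠ z := (show z < i from lt_of_le_of_lt (Nat.zero_le j) hji).ne'
  rcases eq_or_ne j z with rfl | hjz
  · convert transvection_zsmul_mem (first_column i hiz) d using 2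
    push_cast [zsmul_eq_mul]; ring
  · have hzj : z < j := lt_of_le_of_ne (Nat.zero_le j) hjz.symm
    convert transvection_mul_mem hij (first_column i hiz) (h2 z j hzj) using 2
    push_cast; ring
end

section
/- Let Λ ≤ SL(n,ℚ) and b ∈ SL(n,ℚ) be such that b^{-1}Λb contains a finite index subgroup of SL(n,ℤ), and suppose Λ ≤ SL(n,ℤ). Then Λ has finite index in SL(n,ℤ). -/
open Matrix Subgroup

private lemma stmt13_int_of_den_dvd {q : ℚ} {m : ℕ} (h : q.den ∣ m) :
    ∃ z : ℤ, (m : ℚ) * q = z := by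
  obtain ⟨t, ht⟩ := h
  refine ⟨(t : ℤ) * q.num, ?_⟩
  rw [ht]
  push_cast
  rw [mul_comm (q.den : ℚ) (t : ℚ), mul_assoc, mul_comm (q.den : ℚ) q,
    Rat.mul_den_eq_num]

private lemma stmt13_core {n m : ℕ} (c : Matrix.SpecialLinearGroup (Fin n) ℚ)
    (A' A : Matrix (Fin n) (Fin n) ℤ)
    (hA' : A'.map (Int.cast : ℤ → ℚ) = (m : ℚ) • (c : Matrix (Fin n) (Fin n) ℚ))
    (hA : A.map (Int.cast : ℤ → ℚ) = (m : ℚ) • ((c⁻¹ : Matrix.SpecialLinearGroup (Fin n) ℚ) :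
      Matrix (Fin n) (Fin n) ℚ))
    (x : Matrix.SpecialLinearGroup (Fin n) ℤ)
    (hx : Matrix.SpecialLinearGroup.map (Int.castRingHom (ZMod (m * m))) x = 1) :
    c * (Matrix.SpecialLinearGroup.map (Int.castRingHom ℚ) x) * c⁻¹ ∈
      (Matrix.SpecialLinearGroup.map (n := Fin n) (Int.castRingHom ℚ)).range := by
  classical
  have hdvd : ∀ i j, ((m * m : ℕ) : ℤ) ∣
      ((x : Matrix (Fin n) (Fin n) ℤ) i j - (1 : Matrix (Fin n) (Fin n) ℤ) i j) := by
    intro i j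
    have h1 : (((x : Matrix (Fin n) (Fin n) ℤ) i j : ZMod (m * m))) =
        (((1 : Matrix (Fin n) (Fin n) ℤ) i j : ℤ) : ZMod (m * m)) := by
      have := congrArg (fun z : Matrix.SpecialLinearGroup (Fin n) (ZMod (m * m)) =>
        (z : Matrix (Fin n) (Fin n) (ZMod (m * m))) i j) hx
      simpa [Matrix.SpecialLinearGroup.map_apply_coe, RingHom.mapMatrix_apply,
        Matrix.map_apply, Matrix.one_apply, apply_ite (Int.cast : ℤ → ZMod (m * m))]
        using this
    exact ((ZMod.intCast_eq_intCast_iff _ _ _).mp h1).symm.dvd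
  obtain ⟨y, hxy⟩ : ∃ y : Matrix (Fin n) (Fin n) ℤ,
      (x : Matrix (Fin n) (Fin n) ℤ) = 1 + ((m * m : ℕ) : ℤ) • y := by
    refine ⟨Matrix.of fun i j =>
      ((x : Matrix (Fin n) (Fin n) ℤ) i j - (1 : Matrix (Fin n) (Fin n) ℤ) i j) /
        ((m * m : ℕ) : ℤ), ?_⟩
    ext i j
    have := Int.mul_ediv_cancel' (hdvd i j)
    simp only [Matrix.add_apply, Matrix.smul_apply, Matrix.of_apply, smul_eq_mul]
    omega
  set B : Matrix (Fin n) (Fin n) ℚ := ↑c with hB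
  set Bi : Matrix (Fin n) (Fin n) ℚ := ↑(c⁻¹) with hBi
  have hBBi : B * Bi = 1 := by
    rw [hB, hBi, ← Matrix.SpecialLinearGroup.coe_mul, mul_inv_cancel,
      Matrix.SpecialLinearGroup.coe_one]
  have hYQ : (x : Matrix (Fin n) (Fin n) ℤ).map (Int.cast : ℤ → ℚ) =
      1 + ((m * m : ℕ) : ℚ) • (y.map (Int.cast : ℤ → ℚ)) := by
    rw [hxy]
    ext i j
    simp only [Matrix.map_apply, Matrix.add_apply, Matrix.smul_apply, Matrix.one_apply,
      apply_ite (Int.cast : ℤ → ℚ), smul_eq_mul]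
    push_cast
    ring
  have key : (1 + A' * y * A).map (Int.cast : ℤ → ℚ) =
      B * ((x : Matrix (Fin n) (Fin n) ℤ).map (Int.cast : ℤ → ℚ)) * Bi := by
    rw [hYQ]
    have hmapmul : ∀ P Q : Matrix (Fin n) (Fin n) ℤ,
        (P * Q).map (Int.cast : ℤ → ℚ) = P.map Int.cast * Q.map Int.cast := fun P Q =>
      Matrix.map_mul (f := Int.castRingHom ℚ)
    have hmapadd : ∀ P Q : Matrix (Fin n) (Fin n) ℤ,
        (P + Q).map (Int.cast : ℤ → ℚ) = P.map Int.cast + Q.map Int.cast := fun P Q => by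
      ext i j; simp [Matrix.map_apply]
    have hmapone : (1 : Matrix (Fin n) (Fin n) ℤ).map (Int.cast : ℤ → ℚ) = 1 := by
      ext i j; simp [Matrix.map_apply, Matrix.one_apply, apply_ite (Int.cast : ℤ → ℚ)]
    rw [hmapadd, hmapone, hmapmul, hmapmul, hA', hA]
    rw [mul_add, add_mul, mul_one, hBBi]
    congr 1
    simp only [Matrix.smul_mul, Matrix.mul_smul, smul_smul]
    norm_cast
  have hdet : (1 + A' * y * A).det = 1 := by
    have h2 : ((1 + A' * y * A).map (Int.cast : ℤ → ℚ)).det = 1 := by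
      rw [key]
      have hx1 : ((x : Matrix (Fin n) (Fin n) ℤ).map (Int.cast : ℤ → ℚ)).det = 1 := by
        rw [show (x : Matrix (Fin n) (Fin n) ℤ).map (Int.cast : ℤ → ℚ) =
          (Int.castRingHom ℚ).mapMatrix (x : Matrix (Fin n) (Fin n) ℤ) from rfl,
          ← RingHom.map_det]
        simp [x.prop]
      rw [Matrix.det_mul, Matrix.det_mul, hx1, mul_one, ← Matrix.det_mul, hBBi]
      simp
    rw [show (1 + A' * y * A).map (Int.cast : ℤ → ℚ) =
      (Int.castRingHom ℚ).mapMatrix (1 + A' * y * A) from rfl, ← RingHom.map_det] at h2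
    rw [eq_intCast (Int.castRingHom ℚ)] at h2
    exact_mod_cast h2
  refine ⟨⟨1 + A' * y * A, hdet⟩, ?_⟩
  apply Subtype.ext
  simp only [Matrix.SpecialLinearGroup.map_apply_coe, RingHom.mapMatrix_apply,
    Matrix.SpecialLinearGroup.coe_mul]
  exact key

private lemma stmt13_conj_mem_range {n : ℕ} (c : Matrix.SpecialLinearGroup (Fin n) ℚ) :
    ∃ M : ℕ, M ≠ 0 ∧ ∀ x : Matrix.SpecialLinearGroup (Fin n) ℤ,
      Matrix.SpecialLinearGroup.map (Int.castRingHom (ZMod M)) x = 1 →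
      c * (Matrix.SpecialLinearGroup.map (Int.castRingHom ℚ) x) * c⁻¹ ∈
        (Matrix.SpecialLinearGroup.map (n := Fin n) (Int.castRingHom ℚ)).range := by
  classical
  obtain ⟨m, hmne, hd1, hd2⟩ : ∃ m : ℕ, m ≠ 0 ∧
      (∀ i j, ((c : Matrix (Fin n) (Fin n) ℚ) i j).den ∣ m) ∧
      (∀ i j, (((c⁻¹ : Matrix.SpecialLinearGroup (Fin n) ℚ) :
        Matrix (Fin n) (Fin n) ℚ) i j).den ∣ m) := by
    refine ⟨∏ p : Fin n × Fin n, (((c : Matrix (Fin n) (Fin n) ℚ) p.1 p.2).den *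
      (((c⁻¹ : Matrix.SpecialLinearGroup (Fin n) ℚ) :
        Matrix (Fin n) (Fin n) ℚ) p.1 p.2).den), ?_, ?_, ?_⟩
    · exact Finset.prod_ne_zero_iff.mpr fun p _ =>
        Nat.mul_ne_zero (Rat.den_nz _) (Rat.den_nz _)
    · exact fun i j => dvd_trans (dvd_mul_right _ _)
        (Finset.dvd_prod_of_mem _ (Finset.mem_univ (i, j)))
    · exact fun i j => dvd_trans (dvd_mul_left _ _)
        (Finset.dvd_prod_of_mem _ (Finset.mem_univ (i, j)))
  choose A'f hA' using fun i j => stmt13_int_of_den_dvd (hd1 i j)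
  choose Af hA using fun i j => stmt13_int_of_den_dvd (hd2 i j)
  refine ⟨m * m, Nat.mul_ne_zero hmne hmne, fun x hx => ?_⟩
  refine stmt13_core c (Matrix.of A'f) (Matrix.of Af) ?_ ?_ x hx
  · ext i j
    simp only [Matrix.map_apply, Matrix.smul_apply, Matrix.of_apply, smul_eq_mul]
    exact (hA' i j).symm
  · ext i j
    simp only [Matrix.map_apply, Matrix.smul_apply, Matrix.of_apply, smul_eq_mul]
    exact (hA i j).symm




/-- **Theorem.** View `SL(n,ℤ)` as the subgroup of `SL(n,ℚ)` given by the range of the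
entrywise inclusion `ℤ → ℚ`. If `Λ ≤ SL(n,ℤ)` and `b ∈ SL(n,ℚ)` are such that `b⁻¹Λb`
contains a subgroup `H` of finite index in `SL(n,ℤ)`, then `Λ` has finite index in
`SL(n,ℤ)` (indices expressed via `Subgroup.relindex`). -/
theorem stmt13 (n : ℕ) (Λ H : Subgroup (Matrix.SpecialLinearGroup (Fin n) ℚ))
    (b : Matrix.SpecialLinearGroup (Fin n) ℚ)
    (hΛ : Λ ≤ (Matrix.SpecialLinearGroup.map (n := Fin n) (Int.castRingHom ℚ)).range)
    (hH : H ≤ (Matrix.SpecialLinearGroup.map (n := Fin n) (Int.castRingHom ℚ)).range)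
    (hHfi : H.relIndex
        (Matrix.SpecialLinearGroup.map (n := Fin n) (Int.castRingHom ℚ)).range ≠ 0)
    (hconj : ∀ x ∈ H, b * x * b⁻¹ ∈ Λ) :
    Λ.relIndex
      (Matrix.SpecialLinearGroup.map (n := Fin n) (Int.castRingHom ℚ)).range ≠ 0 := by
  classical
  set fh : Matrix.SpecialLinearGroup (Fin n) ℤ →* Matrix.SpecialLinearGroup (Fin n) ℚ :=
    Matrix.SpecialLinearGroup.map (n := Fin n) (Int.castRingHom ℚ) with hfh
  set Γ : Subgroup (Matrix.SpecialLinearGroup (Fin n) ℚ) := fh.range with hΓ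
  obtain ⟨M, hM, hcore⟩ := stmt13_conj_mem_range b⁻¹
  haveI : NeZero M := ⟨hM⟩
  set ρ : Matrix.SpecialLinearGroup (Fin n) ℤ →* Matrix.SpecialLinearGroup (Fin n) (ZMod M) :=
    Matrix.SpecialLinearGroup.map (Int.castRingHom (ZMod M)) with hρ
  set K : Subgroup (Matrix.SpecialLinearGroup (Fin n) ℚ) := ρ.ker.map fh with hK
  have finj : Function.Injective fh := by
    intro g h hgh
    apply Subtype.ext
    ext i j
    have := congrArg (fun z : Matrix.SpecialLinearGroup (Fin n) ℚ =>
      (z : Matrix (Fin n) (Fin n) ℚ) i j) hgh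
    simp only [hfh, Matrix.SpecialLinearGroup.map_apply_coe, RingHom.mapMatrix_apply,
      Matrix.map_apply, eq_intCast, Int.cast_injective.eq_iff] at this
    exact_mod_cast this
  -- K has finite index in Γ
  have hKfi : K.relIndex Γ ≠ 0 := by
    have h1 : K.relIndex Γ = ρ.ker.index := by
      rw [hΓ, MonoidHom.range_eq_map, hK, ← Subgroup.relIndex_comap,
        Subgroup.comap_map_eq_self_of_injective finj, Subgroup.relIndex_top_right]
    rw [h1, Subgroup.index_ker]
    exact Nat.card_pos.ne'
  -- conjugation automorphism
  set e : Matrix.SpecialLinearGroup (Fin n) ℚ ≃* Matrix.SpecialLinearGroup (Fin n) ℚ :=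
    MulAut.conj b with he
  have hconjrel : ∀ J Γ' : Subgroup (Matrix.SpecialLinearGroup (Fin n) ℚ),
      (J.map e.toMonoidHom).relIndex (Γ'.map e.toMonoidHom) = J.relIndex Γ' := by
    intro J Γ'
    rw [Subgroup.map_equiv_eq_comap_symm' e J, Subgroup.relIndex_comap,
      Subgroup.map_equiv_eq_comap_symm' e.symm, MulEquiv.symm_symm,
      Subgroup.comap_map_eq_self_of_injective (f := e.toMonoidHom) e.injective]
  set J : Subgroup (Matrix.SpecialLinearGroup (Fin n) ℚ) := H ⊓ K with hJ
  have hJfi : J.relIndex Γ ≠ 0 := Subgroup.relIndex_inf_ne_zero hHfi hKfi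
  set Jc : Subgroup (Matrix.SpecialLinearGroup (Fin n) ℚ) := J.map e.toMonoidHom with hJc
  set Γc : Subgroup (Matrix.SpecialLinearGroup (Fin n) ℚ) := Γ.map e.toMonoidHom with hΓc
  have hJcΛ : Jc ≤ Λ := by
    rintro _ ⟨g, hg, rfl⟩
    simpa [he] using hconj g hg.1
  have hKΓc : K ≤ Γc := by
    rintro _ ⟨g, hg, rfl⟩
    have hmem := hcore g (by exact hg)
    rw [inv_inv] at hmem
    refine ⟨b⁻¹ * fh g * b, hmem, ?_⟩
    simp [he, mul_assoc]
  have hΓcΓ : Γc.relIndex Γ ≠ 0 := fun h0 =>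
    hKfi (Nat.eq_zero_of_zero_dvd (h0 ▸ Subgroup.relIndex_dvd_of_le_left Γ hKΓc))
  have hJcΓc : Jc.relIndex Γc ≠ 0 := by
    rw [hJc, hΓc, hconjrel]; exact hJfi
  have hJcΓ : Jc.relIndex Γ ≠ 0 := Subgroup.relIndex_ne_zero_trans hJcΓc hΓcΓ
  exact fun h0 =>
    hJcΓ (Nat.eq_zero_of_zero_dvd (h0 ▸ Subgroup.relIndex_dvd_of_le_left Γ hJcΛ))
end

section
/- For any b ∈ GL(n,ℚ) and any m ≥ 1, the groups SL(n,ℤ) and b·SL(n,ℤ)·b^{-1} are commensurable: their intersection has finite index in both. -/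
/-!
Let `c` be the product of the denominators of `b⁻¹` and `b`. For an integer matrix
`γ = 1 + c • k` one has `b⁻¹ γ b = 1 + num(b⁻¹) k num(b)`, which is integral of determinant `1`.
Hence `b Γ b⁻¹` contains the image of the principal congruence subgroup `Γ(c)`, which has finite
index in `Γ = SL(n, ℤ)`; so `b Γ b⁻¹ ∩ Γ` has finite index in `Γ` for every `b`, and applying this
to `b⁻¹` and conjugating back by `b` gives finite index in `b Γ b⁻¹`.
-/

open Subgroup
open scoped Pointwise

theorem Subgroup.commensurable_map_conj_of_forall_relIndex_ne_zero {G : Type*} [Group G]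
    {H : Subgroup G}
    (hH : ∀ g : G, (H.map (MulAut.conj g).toMonoidHom).relIndex H ≠ 0) (g : G) :
    Commensurable H (H.map (MulAut.conj g).toMonoidHom) := by
  refine ⟨?_, hH g⟩
  have := relIndex_pointwise_smul (MulAut.conj g⁻¹) H (MulAut.conj g • H)
  rw [← mul_smul, ← map_mul, inv_mul_cancel, map_one, one_smul] at this
  exact this ▸ hH g⁻¹

namespace Matrix

lemma den_smul_eq_map_num {m n : Type*} [Fintype m] [Fintype n] (A : Matrix m n ℚ) :
    (A.den : ℚ) • A = A.num.map (↑) := by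
  ext i j
  rw [smul_apply, map_apply, ← A.num_div_den i j, smul_eq_mul,
    mul_div_cancel₀ _ (Nat.cast_ne_zero.mpr A.den_ne_zero)]

variable {n : Type*} [Fintype n] [DecidableEq n]

lemma mul_map_one_add_smul_mul {B C : Matrix n n ℚ} (hCB : C * B = 1) (k : Matrix n n ℤ) :
    C * (1 + ((C.den * B.den : ℕ) : ℤ) • k).map (↑) * B = (1 + C.num * k * B.num).map (↑) := by
  have hk : (((C.den * B.den : ℕ) : ℤ) • k).map (Int.cast : ℤ → ℚ)
      = ((C.den : ℚ) * B.den) • k.map (↑) := by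
    ext i j
    simp only [map_apply, smul_apply, smul_eq_mul]
    push_cast
    ring
  rw [Matrix.map_add _ Int.cast_add, Matrix.map_one _ Int.cast_zero Int.cast_one, hk,
    Matrix.map_add _ Int.cast_add, Matrix.map_one _ Int.cast_zero Int.cast_one,
    Matrix.map_mul_intCast, Matrix.map_mul_intCast, ← den_smul_eq_map_num, ← den_smul_eq_map_num,
    mul_add, add_mul, mul_one, hCB]
  simp only [Matrix.smul_mul, Matrix.mul_smul, smul_smul, Matrix.mul_assoc, mul_comm]

lemma GeneralLinearGroup.mem_range_mapGL_of_det_eq_one {R S : Type*} [CommRing R] [CommRing S]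
    [Algebra R S] [FaithfulSMul R S] {g : GL n S} {z : Matrix n n R}
    (hgz : (g : Matrix n n S) = z.map (algebraMap R S)) (hg : g.det = 1) :
    g ∈ (SpecialLinearGroup.mapGL (R := R) S).range := by
  have hz : z.det = 1 := FaithfulSMul.algebraMap_injective R S <| by
    rw [RingHom.map_det, RingHom.mapMatrix_apply, ← hgz, ← GeneralLinearGroup.val_det_apply, hg,
      Units.val_one, map_one]
  exact ⟨⟨z, hz⟩, Units.ext hgz.symm⟩

namespace SpecialLinearGroup

variable (n) in
def principalCongruenceSubgroup (N : ℕ) : Subgroup (SpecialLinearGroup n ℤ) :=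
  (map (Int.castRingHom (ZMod N))).ker

instance (N : ℕ) [NeZero N] : (principalCongruenceSubgroup n N).FiniteIndex :=
  finiteIndex_ker _

lemma exists_eq_one_add_smul_of_mem_principalCongruenceSubgroup {N : ℕ}
    {γ : SpecialLinearGroup n ℤ} (hγ : γ ∈ principalCongruenceSubgroup n N) :
    ∃ k : Matrix n n ℤ, (γ : Matrix n n ℤ) = 1 + (N : ℤ) • k := by
  have hdvd : ∀ i j, (N : ℤ) ∣ (γ - 1 : Matrix n n ℤ) i j := by
    intro i j
    rw [← ZMod.intCast_zmod_eq_zero_iff_dvd]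
    have := congrArg (fun g : SpecialLinearGroup n (ZMod N) ↦ (g : Matrix n n (ZMod N)) i j)
      (MonoidHom.mem_ker.mp hγ)
    simp only [map_apply_coe, RingHom.mapMatrix_apply, Matrix.map_apply, coe_one] at this
    by_cases hij : i = j <;> simp_all [one_apply]
  choose k hk using hdvd
  exact ⟨Matrix.of k, by ext i j; simp [← hk]⟩

lemma map_principalCongruenceSubgroup_le_conj (b : GL n ℚ) :
    (principalCongruenceSubgroup n
      (((b⁻¹ : GL n ℚ) : Matrix n n ℚ).den * (b : Matrix n n ℚ).den)).map (mapGL (R := ℤ) ℚ) ≤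
      (mapGL (R := ℤ) ℚ).range.map (MulAut.conj b).toMonoidHom := by
  rintro _ ⟨γ, hγ, rfl⟩
  obtain ⟨k, hk⟩ := exists_eq_one_add_smul_of_mem_principalCongruenceSubgroup hγ
  refine mem_map.mpr ⟨b⁻¹ * mapGL ℚ γ * b, GeneralLinearGroup.mem_range_mapGL_of_det_eq_one
    (z := 1 + ((b⁻¹ : GL n ℚ) : Matrix n n ℚ).num * k * (b : Matrix n n ℚ).num) ?_ ?_, ?_⟩
  · rw [Units.val_mul, Units.val_mul]
    change _ * (γ : Matrix n n ℤ).map (Int.cast : ℤ → ℚ) * _ = _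
    rw [hk]
    exact mul_map_one_add_smul_mul (by rw [← Units.val_mul, inv_mul_cancel, Units.val_one]) k
  · simp [mul_comm]
  · simp [mul_assoc]

lemma relIndex_map_conj_range_mapGL_ne_zero (b : GL n ℚ) :
    ((mapGL (R := ℤ) ℚ).range.map (MulAut.conj b).toMonoidHom).relIndex
      (mapGL (R := ℤ) ℚ).range ≠ 0 := by
  have hle := map_principalCongruenceSubgroup_le_conj b
  set N := ((b⁻¹ : GL n ℚ) : Matrix n n ℚ).den * (b : Matrix n n ℚ).den
  have : NeZero N := ⟨mul_ne_zero (den_ne_zero _) (den_ne_zero _)⟩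
  have hΓ : ((principalCongruenceSubgroup n N).map (mapGL (R := ℤ) ℚ)).relIndex
      (mapGL (R := ℤ) ℚ).range = (principalCongruenceSubgroup n N).index := by
    rw [MonoidHom.range_eq_map, relIndex_map_map_of_injective _ _ mapGL_injective,
      relIndex_top_right]
  exact ne_zero_of_dvd_ne_zero (hΓ ▸ FiniteIndex.index_ne_zero) (relIndex_dvd_of_le_left _ hle)

end SpecialLinearGroup

end Matrix

theorem stmt14_general (n : ℕ) (b : Matrix.GeneralLinearGroup (Fin n) ℚ) :
    Subgroup.Commensurable
      ((Matrix.SpecialLinearGroup.toGL.comp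
        (Matrix.SpecialLinearGroup.map (n := Fin n) (Int.castRingHom ℚ))).range)
      (((Matrix.SpecialLinearGroup.toGL.comp
        (Matrix.SpecialLinearGroup.map (n := Fin n) (Int.castRingHom ℚ))).range).map
          (MulAut.conj b).toMonoidHom) :=
  -- `mapGL ℚ` is `toGL.comp (map (algebraMap ℤ ℚ))`, definitionally the embedding above.
  commensurable_map_conj_of_forall_relIndex_ne_zero
    Matrix.SpecialLinearGroup.relIndex_map_conj_range_mapGL_ne_zero b

/-- **Theorem.** For any `b ∈ GL(n,ℚ)` and any `m ≥ 1`, the subgroups `SL(n,ℤ)` and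
`b · SL(n,ℤ) · b⁻¹` of `GL(n,ℚ)` are commensurable: their intersection has finite index
in both. -/
theorem stmt14 (n : ℕ) (b : Matrix.GeneralLinearGroup (Fin n) ℚ) (m : ℕ) (hm : 1 ≤ m) :
    Subgroup.Commensurable
      ((Matrix.SpecialLinearGroup.toGL.comp
        (Matrix.SpecialLinearGroup.map (n := Fin n) (Int.castRingHom ℚ))).range)
      (((Matrix.SpecialLinearGroup.toGL.comp
        (Matrix.SpecialLinearGroup.map (n := Fin n) (Int.castRingHom ℚ))).range).map
          (MulAut.conj b).toMonoidHom) :=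
  stmt14_general n b
end
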